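/- arXiv:2202.06901 — 9 statements merged into one kernel-verified Lean document; each statement's English description precedes it below -/
import Mathlib

section
/- Let At = {ξ1, …, ξn} be an enumeration of the finite set At. Then in every guarded semilattice, for every element x, one has x = x +_{{ξn}} (x +_{{ξn−1}} (⋯ (x +_{{ξ1}} 0) ⋯)), where +_{{ξ}} denotes the operation indexed by the singleton subset {ξ} ⊆ At. -/
/-- A guarded semilattice on a carrier `X`, with guards drawn from subsets of
a finite nonempty set `At`. -/
structure GuardedSemilattice (At : Type) [Fintype At] [DecidableEq At] (X : Type) where
  zero : X
  op : Finset At → X → X → X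
  gs1 : ∀ (b : Finset At) (x : X), op b x x = x
  gs2 : ∀ (x y : X), op Finset.univ x y = x
  gs3 : ∀ (b : Finset At) (x y : X), op b x y = op bᶜ y x
  gs4 : ∀ (b c : Finset At) (x y z : X), op c (op b x y) z = op (b ∩ c) x (op c y z)

lemma gs_merge {At X : Type} [Fintype At] [DecidableEq At]
    (G : GuardedSemilattice At X) (b c : Finset At) (x a : X) :
    G.op b x (G.op c x a) = G.op (b ∪ c) x a := by
  have h1 : G.op c x a = G.op cᶜ a x := G.gs3 c x a
  rw [h1, G.gs3 b x (G.op cᶜ a x), G.gs4, G.gs1]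
  rw [G.gs3]
  congr 1
  simp [Finset.union_comm, Finset.compl_inter]

lemma gs_foldl {At X : Type} [Fintype At] [DecidableEq At]
    (G : GuardedSemilattice At X) (x a : X) :
    ∀ (l : List At) (c : Finset At),
      l.foldl (fun acc ξ => G.op {ξ} x acc) (G.op c x a)
        = G.op (c ∪ l.toFinset) x a := by
  intro l
  induction l with
  | nil => intro c; simp
  | cons ξ t ih =>
    intro c
    simp only [List.foldl_cons]
    rw [gs_merge, ih]
    congr 1
    ext a; simp

/-- If `At = {ξ1, …, ξn}` is an enumeration of `At` (given by a duplicate-free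
list `l = [ξ1, …, ξn]` containing every element of `At`), then in every guarded
semilattice, `x = x +_{{ξn}} (x +_{{ξn−1}} (⋯ (x +_{{ξ1}} 0) ⋯))`. -/
theorem guardedSemilattice_decomposition
    {At X : Type} [Fintype At] [DecidableEq At] [Nonempty At]
    (G : GuardedSemilattice At X)
    (l : List At) (hnodup : l.Nodup) (hall : ∀ ξ : At, ξ ∈ l) (x : X) :
    x = l.foldl (fun acc ξ => G.op {ξ} x acc) G.zero := by
  have hz : G.zero = G.op ∅ x G.zero := by
    rw [G.gs3]
    simp [G.gs2]
  rw [hz, gs_foldl]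
  have : (∅ : Finset At) ∪ l.toFinset = Finset.univ := by
    ext ξ; simp [hall ξ]
  rw [this, G.gs2]
end

section
/- Every guarded semilattice embeds into one of the form F Y: for any guarded semilattice X, the map η : X → (At → Option X) defined by η(x)(ξ) = some (x +_{{ξ}} 0) is injective and preserves every binary operation, i.e. η(x +_b y) = η(x) +_b η(y) in F X for all x, y ∈ X and all b ⊆ At. -/
/-- The free-style guarded semilattice operations on `At → Option Y`:
`0 = λξ. none` and `(h +_b k)(ξ) = h ξ` if `ξ ∈ b`, else `k ξ`. -/
def Fop {At Y : Type} [Fintype At] [DecidableEq At]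
    (b : Finset At) (h k : At → Option Y) : At → Option Y :=
  fun ξ => if ξ ∈ b then h ξ else k ξ

section Aux

variable {At X : Type} [Fintype At] [DecidableEq At] (G : GuardedSemilattice At X)

lemma GS.empty_op (x y : X) : G.op ∅ x y = y := by
  rw [G.gs3]; simp [G.gs2]

lemma GS.absorb (c : Finset At) (x y z : X) :
    G.op c x (G.op c y z) = G.op c x z := by
  rw [G.gs3, G.gs4]
  simp [GS.empty_op, ← G.gs3]

lemma GS.self_zero (a : Finset At) (u w : X) :
    G.op a (G.op a u G.zero) w = G.op a u w := by
  rw [G.gs4]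
  simp [GS.absorb]

lemma GS.merge (a b : Finset At) (x y : X) :
    G.op (a ∪ b) x y = G.op b x (G.op a x y) := by
  have h := G.gs4 aᶜ bᶜ y x x
  rw [G.gs1] at h
  have hc : aᶜ ∩ bᶜ = (a ∪ b)ᶜ := by
    rw [Finset.compl_union]
  rw [hc] at h
  rw [G.gs3 (a ∪ b), ← h, ← G.gs3, ← G.gs3]

end Aux

/-- Every guarded semilattice embeds into one of the form `F X`: the map
`η : X → (At → Option X)` with `η x ξ = some (x +_{{ξ}} 0)` is injective and
preserves every binary operation: `η (x +_b y) = η x +_b η y` in `F X`. -/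
theorem guardedSemilattice_embedding
    {At X : Type} [Fintype At] [DecidableEq At] [Nonempty At]
    (G : GuardedSemilattice At X) :
    Function.Injective (fun (x : X) (ξ : At) => some (G.op {ξ} x G.zero)) ∧
    ∀ (b : Finset At) (x y : X),
      (fun ξ : At => some (G.op {ξ} (G.op b x y) G.zero)) =
        Fop b (fun ξ : At => some (G.op {ξ} x G.zero))
          (fun ξ : At => some (G.op {ξ} y G.zero)) := by
  constructor
  · intro x y h
    have hξ : ∀ ξ : At, G.op {ξ} x G.zero = G.op {ξ} y G.zero := by
      intro ξ
      have := congrFun h ξ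
      simpa using this
    have key : ∀ b : Finset At, G.op b x y = y := by
      intro b
      induction b using Finset.induction_on with
      | empty => exact GS.empty_op G x y
      | insert _ _ hnot ih =>
        rename_i ξ s
        have : insert ξ s = {ξ} ∪ s := by
          ext a; simp [Finset.mem_insert]
        rw [this, Finset.union_comm, GS.merge, ih,
          ← GS.self_zero G {ξ} x y, hξ, GS.self_zero, G.gs1]
    have := key Finset.univ
    rw [G.gs2] at this
    exact this
  · intro b x y
    funext ξ
    simp only [Fop]
    by_cases hb : ξ ∈ b
    · have hcap : b ∩ ({ξ} : Finset At) = {ξ} := by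
        rw [Finset.inter_comm]; exact Finset.singleton_inter_of_mem hb
      rw [if_pos hb, G.gs4, hcap, GS.absorb]
    · have hbc : ξ ∈ bᶜ := by simpa using hb
      have hcap : bᶜ ∩ ({ξ} : Finset At) = {ξ} := by
        rw [Finset.inter_comm]; exact Finset.singleton_inter_of_mem hbc
      rw [if_neg hb, G.gs3 b, G.gs4, hcap, GS.absorb]
end

section
/- F X is the free guarded semilattice on the set X: for every guarded semilattice Y and every function f : X → Y, there exists a unique guarded semilattice homomorphism f̂ : F X → Y (a map preserving 0 and every operation +_b) such that f̂(λξ. some x) = f(x) for all x ∈ X. -/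
section Aux
variable {At X Y : Type} [Fintype At] [DecidableEq At]

lemma gsl_op_empty (H : GuardedSemilattice At Y) (x y : Y) : H.op ∅ x y = y := by
  rw [H.gs3]; simp [H.gs2]

/-- chained fold -/
def GT (H : GuardedSemilattice At Y) : List At → (At → Y) → Y
  | [], _ => H.zero
  | ξ :: t, v => H.op {ξ} (v ξ) (GT H t v)

lemma gsl_key (H : GuardedSemilattice At Y) (b A : Finset At) (x y p q : Y) :
    H.op b (H.op A x p) (H.op A y q)
      = H.op (A ∩ b) x (H.op (A ∩ bᶜ) y (H.op b p q)) := by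
  rw [H.gs4]
  congr 1
  rw [H.gs3 b p, H.gs4, ← H.gs3]

lemma GT_dist (H : GuardedSemilattice At Y) (b : Finset At) (l : List At) (v w : At → Y) :
    H.op b (GT H l v) (GT H l w) = GT H l (fun ξ => if ξ ∈ b then v ξ else w ξ) := by
  induction l with
  | nil => simp [GT, H.gs1]
  | cons ξ t ih =>
    simp only [GT]
    rw [gsl_key, ih]
    by_cases hb : ξ ∈ b
    · have h1 : ({ξ} : Finset At) ∩ b = {ξ} := by
        ext a; simp (config := {contextual := true}) [hb]
      have h2 : ({ξ} : Finset At) ∩ bᶜ = ∅ := by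
        ext a; simp (config := {contextual := true}) [hb]
      rw [h1, h2, gsl_op_empty]
      simp [hb]
    · have h1 : ({ξ} : Finset At) ∩ b = ∅ := by
        ext a; simp (config := {contextual := true}) [hb]
      have h2 : ({ξ} : Finset At) ∩ bᶜ = {ξ} := by
        ext a; simp (config := {contextual := true}) [hb]
      rw [h1, h2, gsl_op_empty]
      simp [hb]

lemma GT_zero (H : GuardedSemilattice At Y) (l : List At) :
    GT H l (fun _ => H.zero) = H.zero := by
  induction l with
  | nil => rfl
  | cons ξ t ih => simp [GT, ih, H.gs1]

lemma GT_const (H : GuardedSemilattice At Y) (l : List At) (a : Y) :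
    GT H l (fun _ => a) = H.op l.toFinsetᶜ H.zero a := by
  induction l with
  | nil => simp [GT]; rw [H.gs2]
  | cons ξ t ih =>
    simp only [GT]
    rw [ih, H.gs3, H.gs4, H.gs1]
    congr 1
    ext a; simp [and_comm]

/-- decomposition of a function into guarded pieces -/
def Hf : List At → (At → Option X) → (At → Option X)
  | [], _ => fun _ => none
  | ξ :: t, h => Fop {ξ} (fun _ => h ξ) (Hf t h)

lemma Hf_eq (l : List At) (h : At → Option X) (ξ : At) (hm : ξ ∈ l) :
    Hf l h ξ = h ξ := by
  induction l with
  | nil => cases hm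
  | cons a t ih =>
    simp only [Hf, Fop]
    by_cases hx : ξ = a
    · subst hx; simp
    · simp only [Finset.mem_singleton, hx, if_false]
      exact ih (by
        rcases List.mem_cons.mp hm with h1 | h1
        · exact absurd h1 hx
        · exact h1)

end Aux

/-- `F X = (At → Option X)` is the free guarded semilattice on the set `X`:
for every guarded semilattice `Y` and function `f : X → Y`, there is a unique
guarded semilattice homomorphism `f̂ : F X → Y` (preserving `0` and every
operation `+_b`) with `f̂ (λξ. some x) = f x` for all `x ∈ X`. -/
theorem guardedSemilattice_free
    {At X Y : Type} [Fintype At] [DecidableEq At] [Nonempty At]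
    (H : GuardedSemilattice At Y) (f : X → Y) :
    ∃! fhat : (At → Option X) → Y,
      (fhat (fun _ => none) = H.zero) ∧
      (∀ (b : Finset At) (h k : At → Option X),
        fhat (Fop b h k) = H.op b (fhat h) (fhat k)) ∧
      (∀ x : X, fhat (fun _ => some x) = f x) := by
  classical
  set l : List At := (Finset.univ : Finset At).toList with hl
  set e : Option X → Y := fun o => o.elim H.zero f with he
  refine ⟨fun h => GT H l (fun ξ => e (h ξ)), ⟨?_, ?_, ?_⟩, ?_⟩
  · exact GT_zero H l
  · intro b h k
    rw [GT_dist]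
    show GT H l (fun ξ => e (Fop b h k ξ)) = _
    congr 1
    funext ξ
    simp only [Fop]
    split <;> rfl
  · intro x
    show GT H l (fun _ => e (some x)) = f x
    rw [GT_const H l (e (some x))]
    have : l.toFinset = Finset.univ := by simp [hl]
    rw [this, show ((Finset.univ : Finset At)ᶜ) = ∅ by simp, gsl_op_empty]
    rfl
  · rintro g ⟨g0, ghom, gsome⟩
    funext h
    have hcov : Hf l h = h := by
      funext ξ
      exact Hf_eq l h ξ (by simp [hl])
    have key : ∀ (l' : List At), g (Hf l' h) = GT H l' (fun ξ => e (h ξ)) := by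
      intro l'
      induction l' with
      | nil => exact g0
      | cons ξ t ih =>
        show g (Fop {ξ} (fun _ => h ξ) (Hf t h)) = _
        rw [ghom, ih]
        congr 1
        cases hx : h ξ with
        | none => simpa [hx, he] using g0
        | some x => simpa [hx, he] using gsome x
    calc g h = g (Hf l h) := by rw [hcov]
      _ = GT H l (fun ξ => e (h ξ)) := key l
end

section
/- Unique solvability of guarded systems in ARB (Milner's lemma): every finite guarded system of equations {x_i = e_i}_{i ≤ n} admits a solution, and any two solutions φ, ψ are ≡-equivalent, i.e., φ(x_i) ≡ ψ(x_i) for all i ≤ n. -/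
/-- Milner's process terms (ARB): `e ::= 0 | v | e1 + e2 | a e | μv e`. -/
inductive Exp (V A : Type) : Type
  | zero : Exp V A
  | var : V → Exp V A
  | add : Exp V A → Exp V A → Exp V A
  | act : A → Exp V A → Exp V A
  | mu : V → Exp V A → Exp V A
  deriving DecidableEq

namespace Exp

variable {V A : Type} [DecidableEq V] [DecidableEq A]

/-- Free variables. -/
def fv : Exp V A → Finset V
  | zero => ∅
  | var u => {u}
  | add e1 e2 => fv e1 ∪ fv e2
  | act _ e => fv e
  | mu u e => fv e \ {u}

/-- Bound variables. -/
def bv : Exp V A → Finset V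
  | zero => ∅
  | var _ => ∅
  | add e1 e2 => bv e1 ∪ bv e2
  | act _ e => bv e
  | mu u e => insert u (bv e)

/-- Syntactic substitution `e[f/v]`, replacing free occurrences of `v` by `f`
(capture-avoiding on the pairs `(e, f)` for which no free variable of `f` is
bound in `e`, which is the situation in which it is well-defined). -/
def subst (f : Exp V A) (v : V) : Exp V A → Exp V A
  | zero => zero
  | var u => if u = v then f else var u
  | add e1 e2 => add (subst f v e1) (subst f v e2)
  | act a e => act a (subst f v e)
  | mu u e => if u = v then mu u e else mu u (subst f v e)

/-- Guarded syntactic substitution `e[g//v]`: replaces every guarded free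
occurrence of `v` by `g` and every unguarded free occurrence by `0`. -/
def gsubst (g : Exp V A) (v : V) : Exp V A → Exp V A
  | zero => zero
  | var u => if u = v then zero else var u
  | add e1 e2 => add (gsubst g v e1) (gsubst g v e2)
  | act a e => act a (subst g v e)
  | mu u e => if u = v then mu u e else mu u (gsubst g v e)

/-- Apply a function to the expression component of a step. -/
def liftStep (f : Exp V A → Exp V A) : V ⊕ A × Exp V A → V ⊕ A × Exp V A
  | Sum.inl u => Sum.inl u
  | Sum.inr (a, e) => Sum.inr (a, f e)

/-- The Finset-level guarded substitution operator `[g//v]`: removes the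
element `v`, keeps all other variables, and replaces each pair `(a, f)` by
`(a, f[g/v])`. -/
def fgsubst (g : Exp V A) (v : V) (s : Finset (V ⊕ A × Exp V A)) :
    Finset (V ⊕ A × Exp V A) :=
  (s.erase (Sum.inl v)).image (liftStep (subst g v))

/-- The operational semantics `ε : Exp → Finset (V ⊕ A × Exp)`. -/
def eps : Exp V A → Finset (V ⊕ A × Exp V A)
  | zero => ∅
  | var u => {Sum.inl u}
  | add e1 e2 => eps e1 ∪ eps e2
  | act a e => {Sum.inr (a, e)}
  | mu v e => fgsubst (mu v e) v (eps e)

/-- `v` is guarded in `e`. -/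
def Guarded (v : V) : Exp V A → Prop
  | zero => True
  | var u => u ≠ v
  | add e1 e2 => Guarded v e1 ∧ Guarded v e2
  | act _ _ => True
  | mu u e => u = v ∨ Guarded v e

/-- Milner's provable equivalence `≡`: the smallest congruence containing the
semilattice axioms and the recursion axioms (R1), (R2), closed under (R3). -/
inductive Equiv : Exp V A → Exp V A → Prop
  | refl (e) : Equiv e e
  | symm {e f} : Equiv e f → Equiv f e
  | trans {e f g} : Equiv e f → Equiv f g → Equiv e g
  | addCongr {e1 f1 e2 f2} : Equiv e1 f1 → Equiv e2 f2 → Equiv (add e1 e2) (add f1 f2)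
  | actCongr (a) {e f} : Equiv e f → Equiv (act a e) (act a f)
  | muCongr (v) {e f} : Equiv e f → Equiv (mu v e) (mu v f)
  | addZero (e) : Equiv (add e zero) e
  | addIdem (e) : Equiv (add e e) e
  | addComm (e f) : Equiv (add e f) (add f e)
  | addAssoc (e f g) : Equiv (add (add e f) g) (add e (add f g))
  | r1 (v e) : Equiv (mu v e) (gsubst (mu v e) v e)
  | r2 (v w e) : w ∉ fv e → Equiv (mu v e) (mu w (subst (var w) v e))
  | r3 {v e g} : Equiv g (subst g v e) → Guarded v e → Equiv g (mu v e)

/-- Bisimulations on the operational model of ARB. -/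
def IsBisimulation (R : Exp V A → Exp V A → Prop) : Prop :=
  ∀ e f, R e f →
    (∀ u : V, Sum.inl u ∈ eps e ↔ Sum.inl u ∈ eps f) ∧
    (∀ (a : A) (e' : Exp V A), Sum.inr (a, e') ∈ eps e →
        ∃ f', Sum.inr (a, f') ∈ eps f ∧ R e' f') ∧
    (∀ (a : A) (f' : Exp V A), Sum.inr (a, f') ∈ eps f →
        ∃ e', Sum.inr (a, e') ∈ eps e ∧ R e' f')

/-- Bisimilarity `e ~ f`. -/
def Bisim (e f : Exp V A) : Prop := ∃ R, IsBisimulation R ∧ R e f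

end Exp

namespace Exp

variable {V A : Type} [DecidableEq V] [DecidableEq A]

/-- Simultaneous syntactic substitution along an assignment `σ : V → Exp`
(on terms where no variable relevantly substituted appears bound, this is
capture-avoiding simultaneous substitution). -/
def msubst : (V → Exp V A) → Exp V A → Exp V A
  | _, zero => zero
  | σ, var u => σ u
  | σ, add e1 e2 => add (msubst σ e1) (msubst σ e2)
  | σ, act a e => act a (msubst σ e)
  | σ, mu u e => mu u (msubst (fun w => if w = u then var u else σ w) e)

/-- The assignment sending `x j ↦ φ j` and every other variable to itself. -/
noncomputable def sigmaSub {n : ℕ} (x : Fin n → V) (φ : Fin n → Exp V A) :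
    V → Exp V A :=
  fun w => if h : ∃ j, x j = w then φ h.choose else var w

/-- `φ` is a solution to the system of equations `{x_i = e_i}`:
`φ(x_i) ≡ e_i[φ(x_1)/x_1, …, φ(x_n)/x_n]` for all `i`, and no `x_j` occurs
free in any `φ(x_i)`. -/
def IsSolution {n : ℕ} (x : Fin n → V) (e φ : Fin n → Exp V A) : Prop :=
  (∀ i, Equiv (φ i) (msubst (sigmaSub x φ) (e i))) ∧
  ∀ i j, x j ∉ fv (φ i)

end Exp

namespace Exp

variable {V A : Type} [DecidableEq V] [DecidableEq A]

/-- Update an assignment at one point. -/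
def upd (σ : V → Exp V A) (v : V) (g : Exp V A) : V → Exp V A :=
  fun w => if w = v then g else σ w

lemma msubst_mu (σ : V → Exp V A) (u : V) (e : Exp V A) :
    msubst σ (mu u e) = mu u (msubst (upd σ u (var u)) e) := rfl

lemma upd_self {σ : V → Exp V A} {u : V} (h : σ u = var u) : upd σ u (var u) = σ := by
  funext w
  by_cases hw : w = u
  · subst hw; simp [upd, h]
  · simp [upd, hw]

lemma upd_upd_self {σ : V → Exp V A} {u : V} (g : Exp V A) (h : σ u = var u) :
    upd (upd σ u g) u (var u) = σ := by
  funext w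
  by_cases hw : w = u
  · subst hw; simp [upd, h]
  · simp [upd, hw]

lemma upd_comm {τ : V → Exp V A} {u v : V} (h : u ≠ v) (g₁ g₂ : Exp V A) :
    upd (upd τ u g₁) v g₂ = upd (upd τ v g₂) u g₁ := by
  funext w
  by_cases hu : w = u
  · subst hu; simp [upd, h]
  · by_cases hv : w = v <;> simp [upd, hu, hv, Ne.symm h]

lemma msubst_congr {σ σ' : V → Exp V A} (h : ∀ w, σ w = σ' w) (e : Exp V A) :
    msubst σ e = msubst σ' e := by
  rw [show σ = σ' from funext h]

lemma subst_of_not_mem_fv (g : Exp V A) {v : V} {e : Exp V A} (h : v ∉ fv e) :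
    subst g v e = e := by
  induction e with
  | zero => rfl
  | var u =>
    simp only [fv, Finset.mem_singleton] at h
    simp [subst, Ne.symm h]
  | add e1 e2 ih1 ih2 =>
    simp only [fv, Finset.mem_union, not_or] at h
    simp [subst, ih1 h.1, ih2 h.2]
  | act a e ih =>
    simp only [fv] at h
    simp [subst, ih h]
  | mu u e ih =>
    by_cases hu : u = v
    · simp [subst, hu]
    · simp only [fv, Finset.mem_sdiff, Finset.mem_singleton, not_and, not_not] at h
      have hv : v ∉ fv e := fun hv => hu (h hv).symm
      simp [subst, hu, ih hv]

lemma guarded_of_not_mem_fv {v : V} {e : Exp V A} (h : v ∉ fv e) : Guarded v e := by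
  induction e with
  | zero => trivial
  | var u =>
    simp only [fv, Finset.mem_singleton] at h
    exact Ne.symm h
  | add e1 e2 ih1 ih2 =>
    simp only [fv, Finset.mem_union, not_or] at h
    exact ⟨ih1 h.1, ih2 h.2⟩
  | act a e ih => trivial
  | mu u e ih =>
    by_cases hu : u = v
    · exact Or.inl hu
    · simp only [fv, Finset.mem_sdiff, Finset.mem_singleton, not_and, not_not] at h
      exact Or.inr (ih fun hv => hu (h hv).symm)

lemma gsubst_eq_subst {v : V} {e : Exp V A} (h : Guarded v e) (g : Exp V A) :
    gsubst g v e = subst g v e := by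
  induction e with
  | zero => rfl
  | var u =>
    have hu : u ≠ v := h
    simp [gsubst, subst, hu]
  | add e1 e2 ih1 ih2 =>
    obtain ⟨h1, h2⟩ : Guarded v e1 ∧ Guarded v e2 := h
    simp [gsubst, subst, ih1 h1, ih2 h2]
  | act a e ih => rfl
  | mu u e ih =>
    by_cases hu : u = v
    · simp [gsubst, subst, hu]
    · have h' : Guarded v e := (show u = v ∨ Guarded v e from h).resolve_left hu
      simp [gsubst, subst, hu, ih h']

lemma mu_equiv_subst {v : V} {e : Exp V A} (h : Guarded v e) :
    Equiv (mu v e) (subst (mu v e) v e) := by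
  have h1 := Equiv.r1 v e
  rwa [gsubst_eq_subst h] at h1

lemma guarded_subst {v : V} (u : V) {e g : Exp V A} (he : Guarded v e) (hg : Guarded v g) :
    Guarded v (subst g u e) := by
  induction e with
  | zero => trivial
  | var w =>
    by_cases hw : w = u
    · simpa [subst, hw] using hg
    · simpa [subst, hw] using he
  | add e1 e2 ih1 ih2 =>
    obtain ⟨h1, h2⟩ : Guarded v e1 ∧ Guarded v e2 := he
    exact ⟨ih1 h1, ih2 h2⟩
  | act a e ih => trivial
  | mu w e ih =>
    by_cases hw : w = u
    · simpa [subst, hw] using he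
    · show Guarded v (if w = u then mu w e else mu w (subst g u e))
      rw [if_neg hw]
      rcases (show w = v ∨ Guarded v e from he) with h | h
      · exact Or.inl h
      · exact Or.inr (ih h)

lemma mem_bv_subst {u v : V} {g e : Exp V A} (h : u ∈ bv (subst g v e)) :
    u ∈ bv e ∨ u ∈ bv g := by
  induction e with
  | zero => simp [subst, bv] at h
  | var w =>
    by_cases hw : w = v
    · simp only [subst, if_pos hw] at h; exact Or.inr h
    · simp [subst, bv, hw] at h
  | add e1 e2 ih1 ih2 =>
    simp only [subst, bv, Finset.mem_union] at h ⊢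
    rcases h with h | h
    · rcases ih1 h with h' | h'
      · exact Or.inl (Or.inl h')
      · exact Or.inr h'
    · rcases ih2 h with h' | h'
      · exact Or.inl (Or.inr h')
      · exact Or.inr h'
  | act a e ih => exact ih h
  | mu w e ih =>
    by_cases hw : w = v
    · simp only [subst, if_pos hw] at h; exact Or.inl h
    · simp only [subst, if_neg hw, bv, Finset.mem_insert] at h ⊢
      rcases h with h | h
      · exact Or.inl (Or.inl h)
      · rcases ih h with h' | h'
        · exact Or.inl (Or.inr h')
        · exact Or.inr h'

lemma mem_fv_subst {u v : V} {g e : Exp V A} (h : u ∈ fv (subst g v e)) :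
    (u ∈ fv e ∧ u ≠ v) ∨ u ∈ fv g := by
  induction e with
  | zero => simp [subst, fv] at h
  | var w =>
    by_cases hw : w = v
    · simp only [subst, if_pos hw] at h; exact Or.inr h
    · simp only [subst, if_neg hw, fv, Finset.mem_singleton] at h
      subst h
      exact Or.inl ⟨by simp [fv], hw⟩
  | add e1 e2 ih1 ih2 =>
    simp only [subst, fv, Finset.mem_union] at h ⊢
    rcases h with h | h
    · rcases ih1 h with ⟨h1, h2⟩ | h'
      · exact Or.inl ⟨Or.inl h1, h2⟩
      · exact Or.inr h'
    · rcases ih2 h with ⟨h1, h2⟩ | h'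
      · exact Or.inl ⟨Or.inr h1, h2⟩
      · exact Or.inr h'
  | act a e ih => exact ih h
  | mu w e ih =>
    by_cases hw : w = v
    · simp only [subst, if_pos hw, fv, Finset.mem_sdiff, Finset.mem_singleton] at h
      exact Or.inl ⟨by simp [fv, Finset.mem_sdiff]; exact ⟨h.1, h.2⟩, fun huv => h.2 (huv.trans hw.symm)⟩
    · simp only [subst, if_neg hw, fv, Finset.mem_sdiff, Finset.mem_singleton] at h
      rcases ih h.1 with ⟨h1, h2⟩ | h'
      · exact Or.inl ⟨by simp [fv, Finset.mem_sdiff]; exact ⟨h1, h.2⟩, h2⟩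
      · exact Or.inr h'

lemma mem_fv_msubst {u : V} {σ : V → Exp V A} {e : Exp V A} (h : u ∈ fv (msubst σ e)) :
    ∃ w ∈ fv e, u ∈ fv (σ w) := by
  induction e generalizing σ with
  | zero => simp [msubst, fv] at h
  | var w => exact ⟨w, by simp [fv], h⟩
  | add e1 e2 ih1 ih2 =>
    simp only [msubst, fv, Finset.mem_union] at h
    rcases h with h | h
    · obtain ⟨w, hw, hu⟩ := ih1 h
      exact ⟨w, by simp [fv, Finset.mem_union]; exact Or.inl hw, hu⟩
    · obtain ⟨w, hw, hu⟩ := ih2 h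
      exact ⟨w, by simp [fv, Finset.mem_union]; exact Or.inr hw, hu⟩
  | act a e ih => exact ih h
  | mu w e ih =>
    rw [msubst_mu] at h
    simp only [fv, Finset.mem_sdiff, Finset.mem_singleton] at h
    obtain ⟨w', hw', hu⟩ := ih h.1
    by_cases hww : w' = w
    · subst hww
      simp [upd, fv] at hu
      exact absurd hu h.2
    · refine ⟨w', ?_, ?_⟩
      · simp [fv, Finset.mem_sdiff]; exact ⟨hw', hww⟩
      · simpa [upd, hww] using hu

lemma msubst_subst (f : Exp V A) (v : V) {τ : V → Exp V A} {e : Exp V A}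
    (h : ∀ u ∈ bv e, τ u = var u) :
    msubst τ (subst f v e) = msubst (upd τ v (msubst τ f)) e := by
  induction e with
  | zero => rfl
  | var w =>
    by_cases hw : w = v
    · simp [subst, msubst, upd, hw]
    · simp [subst, msubst, upd, hw]
  | add e1 e2 ih1 ih2 =>
    have h1 : ∀ u ∈ bv e1, τ u = var u := fun u hu => h u (by simp [bv, hu])
    have h2 : ∀ u ∈ bv e2, τ u = var u := fun u hu => h u (by simp [bv, hu])
    show add _ _ = add _ _
    rw [ih1 h1, ih2 h2]
  | act a e ih =>
    have h1 : ∀ u ∈ bv e, τ u = var u := fun u hu => h u (by simp [bv, hu])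
    show act a _ = act a _
    rw [ih h1]
  | mu w e ih =>
    have hτw : τ w = var w := h w (by simp [bv])
    by_cases hw : w = v
    · subst hw
      rw [show subst f w (mu w e) = mu w e from by simp [subst],
        msubst_mu, msubst_mu, upd_self hτw, upd_upd_self _ hτw]
    · have h1 : ∀ u ∈ bv e, τ u = var u := fun u hu => h u (by simp [bv, hu])
      rw [show subst f v (mu w e) = mu w (subst f v e) from by simp [subst, hw],
        msubst_mu, msubst_mu, upd_self hτw, ih h1,
        upd_self (show upd τ v (msubst τ f) w = var w by simp [upd, hw, hτw])]

lemma subst_msubst (g : Exp V A) {v : V} {τ : V → Exp V A} (e : Exp V A)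
    (h1 : τ v = var v) (h2 : ∀ w, w ≠ v → v ∉ fv (τ w)) :
    subst g v (msubst τ e) = msubst (upd τ v g) e := by
  induction e generalizing τ with
  | zero => rfl
  | var w =>
    by_cases hw : w = v
    · subst hw
      show subst g w (τ w) = upd τ w g w
      rw [h1]
      simp [subst, upd]
    · show subst g v (τ w) = upd τ v g w
      rw [subst_of_not_mem_fv g (h2 w hw)]
      simp [upd, hw]
  | add e1 e2 ih1 ih2 =>
    show add _ _ = add _ _
    rw [ih1 h1 h2, ih2 h1 h2]
  | act a e ih =>
    show act a _ = act a _
    rw [ih h1 h2]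
  | mu w e ih =>
    by_cases hw : w = v
    · subst hw
      rw [msubst_mu, msubst_mu, upd_self h1, upd_upd_self g h1]
      simp [subst]
    · rw [msubst_mu, msubst_mu,
        show subst g v (mu w (msubst (upd τ w (var w)) e))
          = mu w (subst g v (msubst (upd τ w (var w)) e)) from by simp [subst, hw]]
      have hh1 : upd τ w (var w) v = var v := by simp [upd, Ne.symm hw, h1]
      have hh2 : ∀ z, z ≠ v → v ∉ fv (upd τ w (var w) z) := by
        intro z hz
        by_cases hzw : z = w
        · simp [upd, hzw, fv, Ne.symm hw]
        · simp only [upd, if_neg hzw]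
          exact h2 z hz
      rw [ih hh1 hh2, upd_comm hw (var w) g]

lemma guarded_msubst {v : V} {τ : V → Exp V A} {e : Exp V A} (hg : Guarded v e)
    (h1 : τ v = var v) (h2 : ∀ w, w ≠ v → v ∉ fv (τ w)) :
    Guarded v (msubst τ e) := by
  induction e generalizing τ with
  | zero => trivial
  | var w =>
    by_cases hw : w = v
    · exact absurd hw (show w ≠ v from hg)
    · exact guarded_of_not_mem_fv (h2 w hw)
  | add e1 e2 ih1 ih2 =>
    obtain ⟨hg1, hg2⟩ : Guarded v e1 ∧ Guarded v e2 := hg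
    exact ⟨ih1 hg1 h1 h2, ih2 hg2 h1 h2⟩
  | act a e ih => trivial
  | mu w e ih =>
    rw [msubst_mu]
    by_cases hw : w = v
    · exact Or.inl hw
    · rcases (show w = v ∨ Guarded v e from hg) with h | h
      · exact Or.inl h
      · refine Or.inr (ih h ?_ ?_)
        · simp [upd, Ne.symm hw, h1]
        · intro z hz
          by_cases hzw : z = w
          · simp [upd, hzw, fv, Ne.symm hw]
          · simp only [upd, if_neg hzw]
            exact h2 z hz

lemma equiv_msubst {σ σ' : V → Exp V A} (h : ∀ w, Equiv (σ w) (σ' w)) (e : Exp V A) :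
    Equiv (msubst σ e) (msubst σ' e) := by
  induction e generalizing σ σ' with
  | zero => exact .refl _
  | var w => exact h w
  | add e1 e2 ih1 ih2 => exact .addCongr (ih1 h) (ih2 h)
  | act a e ih => exact .actCongr a (ih h)
  | mu w e ih =>
    rw [msubst_mu, msubst_mu]
    refine .muCongr w (ih ?_)
    intro z
    by_cases hz : z = w
    · simp only [upd, if_pos hz]; exact .refl _
    · simp only [upd, if_neg hz]; exact h z

lemma sigmaSub_apply {n : ℕ} {x : Fin n → V} (hinj : Function.Injective x)
    (φ : Fin n → Exp V A) (j : Fin n) : sigmaSub x φ (x j) = φ j := by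
  have h : ∃ k, x k = x j := ⟨j, rfl⟩
  show (if h : ∃ k, x k = x j then φ h.choose else var (x j)) = φ j
  rw [dif_pos h]
  exact congrArg φ (hinj h.choose_spec)

lemma sigmaSub_apply_of_forall_ne {n : ℕ} {x : Fin n → V} (φ : Fin n → Exp V A)
    {w : V} (h : ∀ j, x j ≠ w) : sigmaSub x φ w = var w := by
  show (if h : ∃ k, x k = w then φ h.choose else var w) = var w
  rw [dif_neg (fun ⟨j, hj⟩ => h j hj)]

lemma sigmaSub_succ {n : ℕ} {x : Fin (n + 1) → V} (hinj : Function.Injective x)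
    (φ : Fin (n + 1) → Exp V A) :
    sigmaSub x φ =
      upd (sigmaSub (fun j : Fin n => x j.castSucc) (fun j => φ j.castSucc))
        (x (Fin.last n)) (φ (Fin.last n)) := by
  have hinj' : Function.Injective (fun j : Fin n => x j.castSucc) :=
    fun a b h => Fin.castSucc_injective n (hinj h)
  funext w
  by_cases hw : ∃ i, x i = w
  · obtain ⟨i, rfl⟩ := hw
    induction i using Fin.lastCases with
    | last =>
      rw [sigmaSub_apply hinj]
      simp [upd]
    | cast j =>
      rw [sigmaSub_apply hinj]
      have hne : x (Fin.castSucc j) ≠ x (Fin.last n) :=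
        fun h => absurd (hinj h) (Fin.castSucc_lt_last j).ne
      show _ = upd _ _ _ (x (Fin.castSucc j))
      rw [show upd (sigmaSub (fun j : Fin n => x j.castSucc) (fun j => φ j.castSucc))
            (x (Fin.last n)) (φ (Fin.last n)) (x (Fin.castSucc j))
          = sigmaSub (fun j : Fin n => x j.castSucc) (fun j => φ j.castSucc)
              (x (Fin.castSucc j)) from if_neg hne]
      exact (sigmaSub_apply hinj' (fun j => φ j.castSucc) j).symm
  · push_neg at hw
    rw [sigmaSub_apply_of_forall_ne _ hw]
    have h1 : ¬ (w = x (Fin.last n)) := fun h => hw _ h.symm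
    show _ = upd _ _ _ w
    rw [show upd (sigmaSub (fun j : Fin n => x j.castSucc) (fun j => φ j.castSucc))
          (x (Fin.last n)) (φ (Fin.last n)) w
        = sigmaSub (fun j : Fin n => x j.castSucc) (fun j => φ j.castSucc) w from if_neg h1]
    exact (sigmaSub_apply_of_forall_ne _ (fun j => hw _)).symm

end Exp

namespace Exp

variable {V A : Type} [DecidableEq V] [DecidableEq A]

theorem main_aux (n : ℕ) : ∀ (x : Fin n → V), Function.Injective x → ∀ (e : Fin n → Exp V A),
    (∀ i j, x j ∉ bv (e i)) → (∀ i j, Guarded (x j) (e i)) →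
    (∃ φ, IsSolution x e φ ∧ ∀ i w, w ∈ fv (φ i) → (∃ k, w ∈ fv (e k)) ∧ ∀ j, w ≠ x j) ∧
    (∀ φ ψ, IsSolution x e φ → IsSolution x e ψ → ∀ i, Equiv (φ i) (ψ i)) := by
  induction n with
  | zero =>
    intro x _ e _ _
    exact ⟨⟨fun i => i.elim0, ⟨fun i => i.elim0, fun i => i.elim0⟩, fun i => i.elim0⟩,
           fun φ ψ _ _ i => i.elim0⟩
  | succ n ih =>
    intro x hinj e hbound hguard
    have hinj' : Function.Injective (fun j : Fin n => x j.castSucc) :=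
      fun a b h => Fin.castSucc_injective n (hinj h)
    have hlastne : ∀ j : Fin n, x j.castSucc ≠ x (Fin.last n) :=
      fun j h => absurd (hinj h) (Fin.castSucc_lt_last j).ne
    have hguardf : ∀ j : Fin n,
        Guarded (x j.castSucc) (mu (x (Fin.last n)) (e (Fin.last n))) :=
      fun j => Or.inr (hguard (Fin.last n) j.castSucc)
    have hbound' : ∀ (i j : Fin n), x j.castSucc ∉
        bv (subst (mu (x (Fin.last n)) (e (Fin.last n))) (x (Fin.last n)) (e i.castSucc)) := by
      intro i j hmem
      rcases mem_bv_subst hmem with h | h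
      · exact hbound i.castSucc j.castSucc h
      · simp only [bv, Finset.mem_insert] at h
        rcases h with h | h
        · exact hlastne j h
        · exact hbound (Fin.last n) j.castSucc h
    have hguard' : ∀ (i j : Fin n), Guarded (x j.castSucc)
        (subst (mu (x (Fin.last n)) (e (Fin.last n))) (x (Fin.last n)) (e i.castSucc)) :=
      fun i j => guarded_subst _ (hguard i.castSucc j.castSucc) (hguardf j)
    have ihh := ih (fun j => x j.castSucc) hinj'
      (fun i => subst (mu (x (Fin.last n)) (e (Fin.last n))) (x (Fin.last n)) (e i.castSucc))
      hbound' hguard'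
    have ha : ∀ σ : Fin n → Exp V A,
        sigmaSub (fun j : Fin n => x j.castSucc) σ (x (Fin.last n)) = var (x (Fin.last n)) :=
      fun σ => sigmaSub_apply_of_forall_ne σ hlastne
    have hb : ∀ (σ : Fin n → Exp V A), (∀ j, x (Fin.last n) ∉ fv (σ j)) →
        ∀ w, w ≠ x (Fin.last n) →
          x (Fin.last n) ∉ fv (sigmaSub (fun j : Fin n => x j.castSucc) σ w) := by
      intro σ hσ w hw
      by_cases h : ∃ j : Fin n, x j.castSucc = w
      · obtain ⟨j, rfl⟩ := h
        rw [sigmaSub_apply hinj']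
        exact hσ j
      · push_neg at h
        rw [sigmaSub_apply_of_forall_ne σ h]
        simp only [fv, Finset.mem_singleton]
        exact fun hh => hw hh.symm
    have hc : ∀ (σ : Fin n → Exp V A) (i : Fin (n+1)) (u : V), u ∈ bv (e i) →
        sigmaSub (fun j : Fin n => x j.castSucc) σ u = var u := by
      intro σ i u hu
      apply sigmaSub_apply_of_forall_ne
      intro j hj
      exact hbound i j.castSucc (by rw [hj]; exact hu)
    have hff : ∀ σ : Fin n → Exp V A,
        msubst (sigmaSub (fun j : Fin n => x j.castSucc) σ) (mu (x (Fin.last n)) (e (Fin.last n)))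
          = mu (x (Fin.last n))
              (msubst (sigmaSub (fun j : Fin n => x j.castSucc) σ) (e (Fin.last n))) :=
      fun σ => by rw [msubst_mu, upd_self (ha σ)]
    have hσdec : ∀ φ : Fin (n+1) → Exp V A,
        sigmaSub x φ = upd (sigmaSub (fun j : Fin n => x j.castSucc) (fun j => φ j.castSucc))
          (x (Fin.last n)) (φ (Fin.last n)) :=
      fun φ => sigmaSub_succ hinj φ
    -- key facts about an arbitrary solution of the full system
    have key : ∀ φ : Fin (n+1) → Exp V A, IsSolution x e φ →
        Equiv (φ (Fin.last n))
          (mu (x (Fin.last n))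
            (msubst (sigmaSub (fun j : Fin n => x j.castSucc) (fun j => φ j.castSucc))
              (e (Fin.last n)))) ∧
        IsSolution (fun j : Fin n => x j.castSucc)
          (fun i => subst (mu (x (Fin.last n)) (e (Fin.last n))) (x (Fin.last n)) (e i.castSucc))
          (fun j => φ j.castSucc) := by
      intro φ hφ
      have hno : ∀ j : Fin n, x (Fin.last n) ∉ fv (φ j.castSucc) :=
        fun j => hφ.2 j.castSucc (Fin.last n)
      have hbφ := hb (fun j => φ j.castSucc) hno
      have claim : Equiv (φ (Fin.last n))
          (mu (x (Fin.last n))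
            (msubst (sigmaSub (fun j : Fin n => x j.castSucc) (fun j => φ j.castSucc))
              (e (Fin.last n)))) := by
        have h0 := hφ.1 (Fin.last n)
        rw [hσdec φ, ← subst_msubst _ _ (ha (fun j => φ j.castSucc)) hbφ] at h0
        exact Equiv.r3 h0
          (guarded_msubst (hguard (Fin.last n) (Fin.last n)) (ha (fun j => φ j.castSucc)) hbφ)
      refine ⟨claim, ?_, ?_⟩
      · intro i
        have h0 := hφ.1 i.castSucc
        rw [hσdec φ] at h0
        refine Equiv.trans h0 ?_
        rw [msubst_subst _ _ (fun u hu => hc (fun j => φ j.castSucc) i.castSucc u hu),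
          hff (fun j => φ j.castSucc)]
        apply equiv_msubst
        intro w
        by_cases hww : w = x (Fin.last n)
        · simp only [upd, if_pos hww]
          exact claim
        · simp only [upd, if_neg hww]
          exact .refl _
      · intro i j
        exact hφ.2 i.castSucc j.castSucc
    constructor
    · -- existence
      obtain ⟨φ', hsol', hfv'⟩ := ihh.1
      have hφ'fv : ∀ j, x (Fin.last n) ∉ fv (φ' j) := by
        intro j hmem
        obtain ⟨⟨k, hk⟩, -⟩ := hfv' j _ hmem
        rcases mem_fv_subst hk with ⟨-, hne⟩ | hmemf
        · exact hne rfl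
        · simp [fv] at hmemf
      have hbφ' := hb φ' hφ'fv
      have hgE : Guarded (x (Fin.last n))
          (msubst (sigmaSub (fun j : Fin n => x j.castSucc) φ') (e (Fin.last n))) :=
        guarded_msubst (hguard (Fin.last n) (Fin.last n)) (ha φ') hbφ'
      have hΦσ : sigmaSub x (Fin.lastCases (motive := fun _ => Exp V A)
            (mu (x (Fin.last n))
              (msubst (sigmaSub (fun j : Fin n => x j.castSucc) φ') (e (Fin.last n)))) φ')
          = upd (sigmaSub (fun j : Fin n => x j.castSucc) φ') (x (Fin.last n))
              (mu (x (Fin.last n))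
                (msubst (sigmaSub (fun j : Fin n => x j.castSucc) φ') (e (Fin.last n)))) := by
        rw [sigmaSub_succ hinj]
        simp only [Fin.lastCases_castSucc, Fin.lastCases_last]
      have hfvΦ : ∀ (i : Fin (n+1)) (w : V),
          w ∈ fv (Fin.lastCases (motive := fun _ => Exp V A)
            (mu (x (Fin.last n))
              (msubst (sigmaSub (fun j : Fin n => x j.castSucc) φ') (e (Fin.last n)))) φ' i) →
          (∃ k, w ∈ fv (e k)) ∧ ∀ j, w ≠ x j := by
        intro i w
        induction i using Fin.lastCases with
        | last =>
          intro hmem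
          simp only [Fin.lastCases_last, fv, Finset.mem_sdiff, Finset.mem_singleton] at hmem
          obtain ⟨hmem, hne⟩ := hmem
          obtain ⟨u, hu, hw⟩ := mem_fv_msubst hmem
          by_cases h : ∃ j : Fin n, x j.castSucc = u
          · obtain ⟨j, rfl⟩ := h
            rw [sigmaSub_apply hinj'] at hw
            obtain ⟨⟨k, hk⟩, hne'⟩ := hfv' j w hw
            constructor
            · rcases mem_fv_subst hk with ⟨h1, -⟩ | h1
              · exact ⟨k.castSucc, h1⟩
              · simp only [fv, Finset.mem_sdiff, Finset.mem_singleton] at h1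
                exact ⟨Fin.last n, h1.1⟩
            · intro j'
              induction j' using Fin.lastCases with
              | last => exact hne
              | cast j' => exact hne' j'
          · push_neg at h
            rw [sigmaSub_apply_of_forall_ne _ h] at hw
            simp only [fv, Finset.mem_singleton] at hw
            subst hw
            refine ⟨⟨Fin.last n, hu⟩, ?_⟩
            intro j'
            induction j' using Fin.lastCases with
            | last => exact hne
            | cast j' => exact fun hh => h j' hh.symm
        | cast i =>
          intro hmem
          simp only [Fin.lastCases_castSucc] at hmem
          obtain ⟨⟨k, hk⟩, hne'⟩ := hfv' i w hmem
          have hwxl : w ≠ x (Fin.last n) := by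
            rintro rfl
            exact hφ'fv i hmem
          constructor
          · rcases mem_fv_subst hk with ⟨h1, -⟩ | h1
            · exact ⟨k.castSucc, h1⟩
            · simp only [fv, Finset.mem_sdiff, Finset.mem_singleton] at h1
              exact ⟨Fin.last n, h1.1⟩
          · intro j'
            induction j' using Fin.lastCases with
            | last => exact hwxl
            | cast j' => exact hne' j'
      refine ⟨Fin.lastCases (motive := fun _ => Exp V A)
          (mu (x (Fin.last n))
            (msubst (sigmaSub (fun j : Fin n => x j.castSucc) φ') (e (Fin.last n)))) φ',
        ⟨?_, fun i j hm => (hfvΦ i _ hm).2 j rfl⟩, hfvΦ⟩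
      intro i
      induction i using Fin.lastCases with
      | last =>
        rw [hΦσ, ← subst_msubst _ _ (ha φ') hbφ']
        simp only [Fin.lastCases_last]
        exact mu_equiv_subst hgE
      | cast i =>
        rw [hΦσ, ← hff φ', ← msubst_subst _ _ (fun u hu => hc φ' i.castSucc u hu)]
        simp only [Fin.lastCases_castSucc]
        exact hsol'.1 i
    · -- uniqueness
      intro φ ψ hφ hψ
      obtain ⟨claimφ, hsolφ'⟩ := key φ hφ
      obtain ⟨claimψ, hsolψ'⟩ := key ψ hψ
      have hEq : ∀ i : Fin n, Equiv (φ i.castSucc) (ψ i.castSucc) :=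
        ihh.2 _ _ hsolφ' hsolψ'
      have hτ : ∀ w, Equiv
          (sigmaSub (fun j : Fin n => x j.castSucc) (fun j => φ j.castSucc) w)
          (sigmaSub (fun j : Fin n => x j.castSucc) (fun j => ψ j.castSucc) w) := by
        intro w
        by_cases h : ∃ j : Fin n, x j.castSucc = w
        · simp only [sigmaSub]
          rw [dif_pos h, dif_pos h]
          exact hEq h.choose
        · simp only [sigmaSub]
          rw [dif_neg h, dif_neg h]
          exact .refl _
      have hlastEq : Equiv (φ (Fin.last n)) (ψ (Fin.last n)) :=
        claimφ.trans ((Equiv.muCongr _ (equiv_msubst hτ _)).trans claimψ.symm)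
      intro i
      induction i using Fin.lastCases with
      | last => exact hlastEq
      | cast i => exact hEq i

end Exp

/-- Milner's lemma for ARB: every finite guarded system of equations
`{x_i = e_i}` (distinct variables `x_i`, none of them bound in any `e_i`,
all of them guarded in every `e_i`) admits a solution, and any two solutions
are `≡`-equivalent. -/
theorem arb_unique_solutions {V A : Type} [DecidableEq V] [DecidableEq A]
    [Countable V] [Infinite V]
    (n : ℕ) (x : Fin n → V) (hinj : Function.Injective x)
    (e : Fin n → Exp V A)
    (hbound : ∀ i j, x j ∉ Exp.bv (e i))
    (hguard : ∀ i j, Exp.Guarded (x j) (e i)) :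
    (∃ φ : Fin n → Exp V A, Exp.IsSolution x e φ) ∧
      ∀ φ ψ : Fin n → Exp V A, Exp.IsSolution x e φ → Exp.IsSolution x e ψ →
        ∀ i, Exp.Equiv (φ i) (ψ i) := by
  obtain ⟨⟨φ, hφ, -⟩, huniq⟩ := Exp.main_aux n x hinj e hbound hguard
  exact ⟨⟨φ, hφ⟩, huniq⟩
end

section
/- The quotient coalgebra structure of ARB is bijective: the map ε̄ : Exp/≡ → Finset (V ⊕ A × Exp/≡) is a bijection. In particular, the map ♥ sending a finite subset of V ⊕ A × Exp to the ≡-class of the formal sum of its elements (with each variable u contributing the term u, each pair (a, e) contributing the term a e, and the empty set contributing 0) induces a two-sided inverse to ε̄. -/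
/-- The setoid of process terms modulo provable equivalence `≡`. -/
def expSetoid (V A : Type) [DecidableEq V] [DecidableEq A] : Setoid (Exp V A) :=
  ⟨Exp.Equiv, ⟨Exp.Equiv.refl, fun h => h.symm, fun h h' => h.trans h'⟩⟩

noncomputable instance {V A : Type} [DecidableEq V] [DecidableEq A] :
    DecidableEq (Quotient (expSetoid V A)) := Classical.decEq _

namespace Exp

variable {V A : Type} [DecidableEq V] [DecidableEq A]

/-- The map on steps sending each variable `u` to itself and each pair
`(a, g)` to `(a, [g]≡)`. -/
def qstep : V ⊕ A × Exp V A → V ⊕ A × Quotient (expSetoid V A)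
  | Sum.inl u => Sum.inl u
  | Sum.inr (a, g) => Sum.inr (a, Quotient.mk (expSetoid V A) g)

end Exp

namespace Exp

variable {V A : Type} [DecidableEq V] [DecidableEq A]

/-- The term associated to a single step: a variable `u` contributes the term
`u`, and a pair `(a, e)` contributes the term `a e`. -/
def toTerm : V ⊕ A × Exp V A → Exp V A
  | Sum.inl u => var u
  | Sum.inr (a, e) => act a e

/-- The formal sum of the elements of a finite subset of `V ⊕ A × Exp`
(with a fixed order and bracketing; the empty set contributes `0`). -/
noncomputable def formalSum (s : Finset (V ⊕ A × Exp V A)) : Exp V A :=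
  (s.toList.map toTerm).foldr add zero

end Exp

/-!
Two facts give the two inverse laws. First, `ε` reads a formal sum back off: `ε(Σ s) = s`.
Second, every term is provably equal to the formal sum of its operational behaviour,
`e ≡ Σ ε(e)`; the only interesting case is `μv e`, where (R1) unfolds the recursion and the
guarded substitution `[g//v]` on terms distributes over a formal sum exactly as the operator
`[g//v]` does on finite sets. Since `≡` contains the semilattice axioms, formal sums of sets with
the same image in `V ⊕ A × Exp/≡` are provably equal, which makes `♥` well defined.
-/

namespace Exp

variable {V A : Type}

def listSum (l : List (Exp V A)) : Exp V A :=
  l.foldr add zero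

theorem formalSum_eq_listSum (s : Finset (V ⊕ A × Exp V A)) :
    formalSum s = listSum (s.toList.map toTerm) :=
  rfl

theorem formalSum_empty : formalSum (∅ : Finset (V ⊕ A × Exp V A)) = zero := by
  rw [formalSum_eq_listSum, Finset.toList_empty]
  rfl

theorem formalSum_singleton (x : V ⊕ A × Exp V A) : formalSum {x} = add (toTerm x) zero := by
  rw [formalSum_eq_listSum, Finset.toList_singleton]
  rfl

variable [DecidableEq V]

theorem Equiv.zero_add (e : Exp V A) : Equiv (add zero e) e :=
  (Equiv.addComm _ _).trans (Equiv.addZero e)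

theorem Equiv.add_left_comm (e f g : Exp V A) :
    Equiv (add e (add f g)) (add f (add e g)) :=
  (Equiv.addAssoc e f g).symm.trans
    ((Equiv.addCongr (Equiv.addComm e f) (Equiv.refl g)).trans (Equiv.addAssoc f e g))

theorem add_listSum_equiv_of_mem {e f : Exp V A} {l : List (Exp V A)} (hf : f ∈ l)
    (hef : Equiv e f) : Equiv (add e (listSum l)) (listSum l) := by
  induction l with
  | nil => cases hf
  | cons g l ih =>
    rcases List.mem_cons.mp hf with rfl | hf
    · exact (Equiv.addAssoc e f (listSum l)).symm.trans
        (Equiv.addCongr ((Equiv.addCongr hef (Equiv.refl f)).trans (Equiv.addIdem f))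
          (Equiv.refl _))
    · exact (Equiv.add_left_comm e g (listSum l)).trans
        (Equiv.addCongr (Equiv.refl g) (ih hf))

theorem listSum_add_equiv {l : List (Exp V A)} {g : Exp V A}
    (h : ∀ e ∈ l, Equiv (add e g) g) : Equiv (add (listSum l) g) g := by
  induction l with
  | nil => exact Equiv.zero_add g
  | cons e l ih =>
    exact (Equiv.addAssoc e (listSum l) g).trans
      ((Equiv.addCongr (Equiv.refl e) (ih fun f hf => h f (List.mem_cons_of_mem e hf))).trans
        (h e List.mem_cons_self))

/-- `add e (listSum m) ≡ listSum m` says that `e` lies below the join of `m` in the semilattice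
`Exp/≡`; two lists each lying below the join of the other have equal joins. -/
theorem listSum_equiv_of_absorb {l m : List (Exp V A)}
    (hl : ∀ e ∈ l, Equiv (add e (listSum m)) (listSum m))
    (hm : ∀ f ∈ m, Equiv (add f (listSum l)) (listSum l)) :
    Equiv (listSum l) (listSum m) :=
  ((listSum_add_equiv hm).symm.trans (Equiv.addComm _ _)).trans (listSum_add_equiv hl)

theorem listSum_equiv_of_mem_iff {l m : List (Exp V A)} (h : ∀ e, e ∈ l ↔ e ∈ m) :
    Equiv (listSum l) (listSum m) :=
  listSum_equiv_of_absorb (fun e he => add_listSum_equiv_of_mem ((h e).mp he) (Equiv.refl e))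
    (fun f hf => add_listSum_equiv_of_mem ((h f).mpr hf) (Equiv.refl f))

theorem listSum_append_equiv (l m : List (Exp V A)) :
    Equiv (listSum (l ++ m)) (add (listSum l) (listSum m)) := by
  induction l with
  | nil => exact (Equiv.zero_add _).symm
  | cons e l ih =>
    exact (Equiv.addCongr (Equiv.refl e) ih).trans (Equiv.addAssoc e (listSum l) (listSum m)).symm

theorem gsubst_listSum (g : Exp V A) (v : V) (l : List (Exp V A)) :
    gsubst g v (listSum l) = listSum (l.map (gsubst g v)) := by
  induction l with
  | nil => rfl
  | cons e l ih => exact congrArg (add (gsubst g v e)) ih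

theorem subst_equiv_subst {g g' : Exp V A} (h : Equiv g g') (v : V) :
    ∀ e : Exp V A, Equiv (subst g v e) (subst g' v e)
  | zero => Equiv.refl _
  | var u => by
    by_cases hu : u = v
    · simpa [subst, hu] using h
    · simpa [subst, hu] using Equiv.refl (var u)
  | add e1 e2 => Equiv.addCongr (subst_equiv_subst h v e1) (subst_equiv_subst h v e2)
  | act a e => Equiv.actCongr a (subst_equiv_subst h v e)
  | mu u e => by
    by_cases hu : u = v
    · simpa [subst, hu] using Equiv.refl (mu u e)
    · simpa [subst, hu] using Equiv.muCongr u (subst_equiv_subst h v e)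

theorem add_formalSum_equiv_of_mem {e : Exp V A} {x : V ⊕ A × Exp V A}
    {s : Finset (V ⊕ A × Exp V A)} (hx : x ∈ s) (hex : Equiv e (toTerm x)) :
    Equiv (add e (formalSum s)) (formalSum s) :=
  add_listSum_equiv_of_mem (List.mem_map_of_mem (Finset.mem_toList.mpr hx)) hex

theorem formalSum_equiv_of_forall_exists {s t : Finset (V ⊕ A × Exp V A)}
    (hs : ∀ x ∈ s, ∃ y ∈ t, Equiv (toTerm x) (toTerm y))
    (ht : ∀ y ∈ t, ∃ x ∈ s, Equiv (toTerm y) (toTerm x)) :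
    Equiv (formalSum s) (formalSum t) := by
  refine listSum_equiv_of_absorb ?_ ?_ <;>
    simp only [List.mem_map, Finset.mem_toList, forall_exists_index, and_imp,
      forall_apply_eq_imp_iff₂]
  · intro x hx
    obtain ⟨y, hy, hxy⟩ := hs x hx
    exact add_formalSum_equiv_of_mem hy hxy
  · intro y hy
    obtain ⟨x, hx, hyx⟩ := ht y hy
    exact add_formalSum_equiv_of_mem hx hyx

theorem gsubst_toTerm_of_ne {g : Exp V A} {v : V} {x : V ⊕ A × Exp V A}
    (hx : x ≠ Sum.inl v) : gsubst g v (toTerm x) = toTerm (liftStep (subst g v) x) := by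
  rcases x with u | ⟨a, e⟩
  · have hu : u ≠ v := by rintro rfl; exact hx rfl
    simp [toTerm, gsubst, liftStep, hu]
  · rfl

variable [DecidableEq A]

theorem formalSum_union_equiv (s t : Finset (V ⊕ A × Exp V A)) :
    Equiv (formalSum (s ∪ t)) (add (formalSum s) (formalSum t)) :=
  (listSum_equiv_of_mem_iff fun e => by
    simp only [List.mem_append, List.mem_map, Finset.mem_toList, Finset.mem_union, or_and_right,
      exists_or]).trans (listSum_append_equiv _ _)

theorem eps_toTerm (x : V ⊕ A × Exp V A) : eps (toTerm x) = {x} := by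
  rcases x with u | ⟨a, e⟩ <;> rfl

theorem eps_formalSum (s : Finset (V ⊕ A × Exp V A)) : eps (formalSum s) = s := by
  suffices ∀ l : List (V ⊕ A × Exp V A), eps (listSum (l.map toTerm)) = l.toFinset by
    rw [formalSum_eq_listSum, this, Finset.toList_toFinset]
  intro l
  induction l with
  | nil => rfl
  | cons x l ih =>
    change eps (toTerm x) ∪ eps (listSum (l.map toTerm)) = _
    rw [eps_toTerm, ih, List.toFinset_cons, Finset.insert_eq]

/-- The unguarded summand `v` is sent to `0` and absorbed, matching its removal by `fgsubst`. -/
theorem gsubst_formalSum_equiv (g : Exp V A) (v : V) (s : Finset (V ⊕ A × Exp V A)) :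
    Equiv (gsubst g v (formalSum s)) (formalSum (fgsubst g v s)) := by
  rw [formalSum_eq_listSum s, gsubst_listSum, List.map_map]
  refine listSum_equiv_of_absorb ?_ ?_ <;>
    simp only [List.mem_map, Finset.mem_toList, Function.comp_apply, forall_exists_index,
      and_imp, forall_apply_eq_imp_iff₂]
  · intro x hx
    by_cases hxv : x = Sum.inl v
    · subst hxv
      simp only [toTerm, gsubst, if_pos]
      exact Equiv.zero_add _
    · rw [gsubst_toTerm_of_ne hxv]
      exact add_formalSum_equiv_of_mem
        (Finset.mem_image_of_mem _ (Finset.mem_erase.mpr ⟨hxv, hx⟩)) (Equiv.refl _)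
  · intro y hy
    obtain ⟨x, hx, rfl⟩ := Finset.mem_image.mp hy
    obtain ⟨hxv, hx⟩ := Finset.mem_erase.mp hx
    rw [← gsubst_toTerm_of_ne hxv]
    exact add_listSum_equiv_of_mem
      (List.mem_map_of_mem (f := gsubst g v ∘ toTerm) (Finset.mem_toList.mpr hx)) (Equiv.refl _)

theorem toTerm_equiv_of_qstep_eq {x y : V ⊕ A × Exp V A} (h : qstep x = qstep y) :
    Equiv (toTerm x) (toTerm y) := by
  rcases x with u | ⟨a, e⟩ <;> rcases y with u' | ⟨a', e'⟩ <;>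
    simp only [qstep, Sum.inl.injEq, Sum.inr.injEq, Prod.mk.injEq, reduceCtorEq] at h
  · exact h ▸ Equiv.refl _
  · exact h.1 ▸ Equiv.actCongr a (Quotient.exact h.2)

theorem formalSum_equiv_of_image_qstep_eq {s t : Finset (V ⊕ A × Exp V A)}
    (h : s.image qstep = t.image qstep) : Equiv (formalSum s) (formalSum t) := by
  have cover : ∀ {s t : Finset (V ⊕ A × Exp V A)}, s.image qstep = t.image qstep →
      ∀ x ∈ s, ∃ y ∈ t, Equiv (toTerm x) (toTerm y) := by
    intro s t h x hx
    obtain ⟨y, hy, hyx⟩ := Finset.mem_image.mp (h ▸ Finset.mem_image_of_mem qstep hx)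
    exact ⟨y, hy, toTerm_equiv_of_qstep_eq hyx.symm⟩
  exact formalSum_equiv_of_forall_exists (cover h) (cover h.symm)

theorem formalSum_fgsubst_equiv {g g' : Exp V A} (h : Equiv g g') (v : V)
    (s : Finset (V ⊕ A × Exp V A)) :
    Equiv (formalSum (fgsubst g v s)) (formalSum (fgsubst g' v s)) := by
  refine formalSum_equiv_of_image_qstep_eq ?_
  simp only [fgsubst, Finset.image_image]
  refine Finset.image_congr fun x _ => ?_
  rcases x with u | ⟨a, e⟩
  · rfl
  · exact congrArg (fun q => Sum.inr (a, q)) (Quotient.sound (subst_equiv_subst h v e))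

theorem equiv_formalSum_eps (e : Exp V A) : Equiv e (formalSum (eps e)) := by
  induction e with
  | zero => rw [eps, formalSum_empty]; exact Equiv.refl zero
  | var u => rw [eps, formalSum_singleton]; exact (Equiv.addZero (var u)).symm
  | add e1 e2 ih1 ih2 =>
    exact (Equiv.addCongr ih1 ih2).trans (formalSum_union_equiv (eps e1) (eps e2)).symm
  | act a e => rw [eps, formalSum_singleton]; exact (Equiv.addZero (act a e)).symm
  | mu v e ih =>
    have unfold := Equiv.muCongr v ih
    exact ((unfold.trans (Equiv.r1 v _)).trans (gsubst_formalSum_equiv _ v (eps e))).trans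
      (formalSum_fgsubst_equiv unfold.symm v (eps e))

noncomputable def outStep : V ⊕ A × Quotient (expSetoid V A) → V ⊕ A × Exp V A
  | Sum.inl u => Sum.inl u
  | Sum.inr (a, q) => Sum.inr (a, q.out)

theorem qstep_outStep (x : V ⊕ A × Quotient (expSetoid V A)) : qstep (outStep x) = x := by
  rcases x with u | ⟨a, q⟩
  · rfl
  · simp [outStep, qstep]

theorem image_qstep_image_outStep (t : Finset (V ⊕ A × Quotient (expSetoid V A))) :
    (t.image outStep).image qstep = t := by
  rw [Finset.image_image, show qstep ∘ outStep = id from funext qstep_outStep, Finset.image_id]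

noncomputable def heart (t : Finset (V ⊕ A × Quotient (expSetoid V A))) :
    Quotient (expSetoid V A) :=
  Quotient.mk _ (formalSum (t.image outStep))

theorem heart_image_qstep (s : Finset (V ⊕ A × Exp V A)) :
    heart (s.image qstep) = Quotient.mk (expSetoid V A) (formalSum s) :=
  Quotient.sound (formalSum_equiv_of_image_qstep_eq (image_qstep_image_outStep _))

end Exp

theorem arb_epsbar_bijective_general {V A : Type} [DecidableEq V] [DecidableEq A]
    (εbar : Quotient (expSetoid V A) → Finset (V ⊕ A × Quotient (expSetoid V A)))
    (hεbar : ∀ e : Exp V A,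
      εbar (Quotient.mk (expSetoid V A) e) = (Exp.eps e).image Exp.qstep) :
    Function.Bijective εbar ∧
    ∃ heart : Finset (V ⊕ A × Quotient (expSetoid V A)) → Quotient (expSetoid V A),
      (∀ s : Finset (V ⊕ A × Exp V A),
          heart (s.image Exp.qstep) = Quotient.mk (expSetoid V A) (Exp.formalSum s)) ∧
      (∀ x, heart (εbar x) = x) ∧
      (∀ t, εbar (heart t) = t) := by
  have left_inv : ∀ x, Exp.heart (εbar x) = x := by
    refine Quotient.ind fun e => ?_
    rw [hεbar, Exp.heart_image_qstep]
    exact Quotient.sound (Exp.equiv_formalSum_eps e).symm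
  have right_inv : ∀ t, εbar (Exp.heart t) = t := fun t => by
    rw [Exp.heart, hεbar, Exp.eps_formalSum, Exp.image_qstep_image_outStep]
  exact ⟨Function.bijective_iff_has_inverse.mpr ⟨_, left_inv, right_inv⟩,
    Exp.heart, Exp.heart_image_qstep, left_inv, right_inv⟩

/-- The quotient coalgebra structure of ARB is bijective: `ε̄` is a bijection,
and the map `♥`, sending a finite subset of `V ⊕ A × Exp` to the `≡`-class of
the formal sum of its elements, induces a two-sided inverse to `ε̄`. -/
theorem arb_epsbar_bijective {V A : Type} [DecidableEq V] [DecidableEq A]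
    [Countable V] [Infinite V]
    (εbar : Quotient (expSetoid V A) → Finset (V ⊕ A × Quotient (expSetoid V A)))
    (hεbar : ∀ e : Exp V A,
      εbar (Quotient.mk (expSetoid V A) e) = (Exp.eps e).image Exp.qstep) :
    Function.Bijective εbar ∧
    ∃ heart : Finset (V ⊕ A × Quotient (expSetoid V A)) → Quotient (expSetoid V A),
      (∀ s : Finset (V ⊕ A × Exp V A),
          heart (s.image Exp.qstep) = Quotient.mk (expSetoid V A) (Exp.formalSum s)) ∧
      (∀ x, heart (εbar x) = x) ∧
      (∀ t, εbar (heart t) = t) :=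
  arb_epsbar_bijective_general εbar hεbar
end

section
/- For every star expression e of Milner's star fragment: if e → ✓ then SL* ⊢ e = ∂e + 1, and if not e → ✓ then SL* ⊢ e = ∂e. -/
/-- Star expressions for the semilattice theory (Milner's star fragment):
`e ::= 0 | 1 | a | e1 + e2 | e1·e2 | e*`. -/
inductive SExp (A : Type) : Type
  | zero : SExp A
  | one : SExp A
  | act : A → SExp A
  | add : SExp A → SExp A → SExp A
  | seq : SExp A → SExp A → SExp A
  | star : SExp A → SExp A
  deriving DecidableEq

namespace SExp

variable {A : Type} [DecidableEq A]

/-- Post-compose the expression component of a step with `·f`; checkmarks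
(represented as `Sum.inl ()`) are kept as checkmarks. -/
def seqAfter (f : SExp A) : Unit ⊕ A × SExp A → Unit ⊕ A × SExp A
  | Sum.inl _ => Sum.inl ()
  | Sum.inr (a, e') => Sum.inr (a, seq e' f)

/-- The small-step semantics `ℓ : SExp → Finset ({✓} ⊕ A × SExp)`, with `✓`
represented as `Sum.inl ()`. -/
def ell : SExp A → Finset (Unit ⊕ A × SExp A)
  | zero => ∅
  | one => {Sum.inl ()}
  | act a => {Sum.inr (a, one)}
  | add e f => ell e ∪ ell f
  | seq e f =>
      ((ell e).image (seqAfter f)).erase (Sum.inl ()) ∪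
        (if Sum.inl () ∈ ell e then ell f else ∅)
  | star e =>
      insert (Sum.inl ()) (((ell e).image (seqAfter (star e))).erase (Sum.inl ()))

/-- `e → ✓`, i.e. `✓ ∈ ℓ(e)`. -/
def Checks (e : SExp A) : Prop := Sum.inl () ∈ ell e

instance (e : SExp A) : Decidable (Checks e) := by unfold Checks; infer_instance

/-- Guardedness of star expressions. -/
def Guarded : SExp A → Prop
  | zero => True
  | one => False
  | act _ => True
  | add e f => Guarded e ∧ Guarded f
  | seq e f => Guarded e ∨ Guarded f
  | star _ => False

/-- Derivability `SL* ⊢ e = f` in equational logic from the semilattice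
axioms, the sequencing axioms, the star axiom `(e + 1)* = (e + 0)*`, the
guarded unrolling axiom, and the fixpoint rule. -/
inductive SLd : SExp A → SExp A → Prop
  | refl (e) : SLd e e
  | symm {e f} : SLd e f → SLd f e
  | trans {e f g} : SLd e f → SLd f g → SLd e g
  | addCongr {e1 f1 e2 f2} : SLd e1 f1 → SLd e2 f2 → SLd (add e1 e2) (add f1 f2)
  | seqCongr {e1 f1 e2 f2} : SLd e1 f1 → SLd e2 f2 → SLd (seq e1 e2) (seq f1 f2)
  | starCongr {e f} : SLd e f → SLd (star e) (star f)
  | addZero (e) : SLd (add e zero) e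
  | addIdem (e) : SLd (add e e) e
  | addComm (e f) : SLd (add e f) (add f e)
  | addAssoc (e f g) : SLd (add (add e f) g) (add e (add f g))
  | oneSeq (e) : SLd (seq one e) e
  | seqOne (e) : SLd (seq e one) e
  | zeroSeq (e) : SLd (seq zero e) zero
  | seqAssoc (e f g) : SLd (seq e (seq f g)) (seq (seq e f) g)
  | distR (e f g) : SLd (seq (add e f) g) (add (seq e g) (seq f g))
  | starOne (e) : SLd (star (add e one)) (star (add e zero))
  | unroll {e} : Guarded e → SLd (star e) (add (seq e (star e)) one)
  | fix {e f g} : SLd g (add (seq e g) f) → Guarded e → SLd g (seq (star e) f)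

/-- The derivative `∂e`. -/
def deriv : SExp A → SExp A
  | zero => zero
  | one => zero
  | act a => act a
  | add e f => add (deriv e) (deriv f)
  | seq e f =>
      if Sum.inl () ∈ ell e then add (seq (deriv e) f) (deriv f)
      else seq (deriv e) f
  | star e => seq (deriv e) (star e)

end SExp

namespace SExp

variable {A : Type} [DecidableEq A]

lemma checks_one : Checks (one : SExp A) := by simp [Checks, ell]

lemma not_checks_zero : ¬ Checks (zero : SExp A) := by simp [Checks, ell]

lemma not_checks_act (a : A) : ¬ Checks (act a) := by simp [Checks, ell]

lemma checks_add {e f : SExp A} : Checks (add e f) ↔ Checks e ∨ Checks f := by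
  simp [Checks, ell]

lemma checks_seq {e f : SExp A} : Checks (seq e f) ↔ Checks e ∧ Checks f := by
  by_cases h : (Sum.inl () : Unit ⊕ A × SExp A) ∈ ell e <;>
    simp [Checks, ell, h]

lemma checks_star (e : SExp A) : Checks (star e) := by simp [Checks, ell]

lemma guarded_deriv (e : SExp A) : Guarded (deriv e) := by
  induction e with
  | zero => trivial
  | one => trivial
  | act a => trivial
  | add e f ih1 ih2 => exact ⟨ih1, ih2⟩
  | seq e f ih1 ih2 =>
      simp only [deriv]
      split
      · exact ⟨Or.inl ih1, ih2⟩
      · exact Or.inl ih1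
  | star e ih => exact Or.inl ih

lemma guarded_of_not_checks : ∀ e : SExp A, ¬ Checks e → Guarded e := by
  intro e
  induction e with
  | zero => intro _; trivial
  | one => intro h; exact absurd checks_one h
  | act a => intro _; trivial
  | add e f ih1 ih2 =>
      intro h
      rw [checks_add] at h
      push_neg at h
      exact ⟨ih1 h.1, ih2 h.2⟩
  | seq e f ih1 ih2 =>
      intro h
      rw [checks_seq] at h
      by_cases he : Checks e
      · exact Or.inr (ih2 fun hf => h ⟨he, hf⟩)
      · exact Or.inl (ih1 he)
  | star e ih => intro h; exact absurd (checks_star e) h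

omit [DecidableEq A] in
lemma sld_add_one_add_one (a b : SExp A) :
    SLd (add (add a one) (add b one)) (add (add a b) one) := by
  refine SLd.trans (SLd.addAssoc a one (add b one)) ?_
  refine SLd.trans (SLd.addCongr (SLd.refl a)
    (SLd.trans (SLd.addComm one (add b one)) ?_)) (SLd.symm (SLd.addAssoc a b one))
  exact SLd.trans (SLd.addAssoc b one one) (SLd.addCongr (SLd.refl b) (SLd.addIdem one))

omit [DecidableEq A] in
lemma sld_add_one_left (a b : SExp A) :
    SLd (add (add a one) b) (add (add a b) one) := by
  refine SLd.trans (SLd.addComm (add a one) b) ?_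
  refine SLd.trans (SLd.symm (SLd.addAssoc b a one)) ?_
  exact SLd.addCongr (SLd.addComm b a) (SLd.refl one)

end SExp

/-- For every star expression `e` of Milner's star fragment: if `e → ✓` then
`SL* ⊢ e = ∂e + 1`, and if not `e → ✓` then `SL* ⊢ e = ∂e`. -/
theorem sl_deriv_decomposition {A : Type} [DecidableEq A] (e : SExp A) :
    (SExp.Checks e → SExp.SLd e (SExp.add (SExp.deriv e) SExp.one)) ∧
    (¬ SExp.Checks e → SExp.SLd e (SExp.deriv e)) := by
  open SExp in
  induction e with
  | zero =>
      exact ⟨fun h => absurd h not_checks_zero, fun _ => SLd.refl zero⟩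
  | one =>
      refine ⟨fun _ => ?_, fun h => absurd checks_one h⟩
      exact SLd.symm (SLd.trans (SLd.addComm (SExp.deriv one) one)
        (by simpa [SExp.deriv] using SLd.addZero one))
  | act a =>
      exact ⟨fun h => absurd h (not_checks_act a), fun _ => SLd.refl (act a)⟩
  | add e f ih1 ih2 =>
      constructor
      · intro h
        rw [checks_add] at h
        by_cases he : Checks e <;> by_cases hf : Checks f
        · exact SLd.trans (SLd.addCongr (ih1.1 he) (ih2.1 hf))
            (sld_add_one_add_one _ _)
        · exact SLd.trans (SLd.addCongr (ih1.1 he) (ih2.2 hf))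
            (sld_add_one_left _ _)
        · exact SLd.trans (SLd.addCongr (ih1.2 he) (ih2.1 hf))
            (SLd.symm (SLd.addAssoc _ _ _))
        · rcases h with h | h <;> [exact absurd h he; exact absurd h hf]
      · intro h
        rw [checks_add] at h
        push_neg at h
        exact SLd.addCongr (ih1.2 h.1) (ih2.2 h.2)
  | seq e f ih1 ih2 =>
      by_cases he : Checks e
      · have step : SLd (seq e f) (add (seq (SExp.deriv e) f) f) :=
          SLd.trans (SLd.seqCongr (ih1.1 he) (SLd.refl f))
            (SLd.trans (SLd.distR _ _ _)
              (SLd.addCongr (SLd.refl _) (SLd.oneSeq f)))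
        have hderiv : SExp.deriv (seq e f) = add (seq (SExp.deriv e) f) (SExp.deriv f) := by
          simp only [SExp.deriv, if_pos (show (Sum.inl () : Unit ⊕ A × SExp A) ∈ ell e from he)]
        constructor
        · intro h
          have hf : Checks f := (checks_seq.mp h).2
          rw [hderiv]
          exact SLd.trans step (SLd.trans
            (SLd.addCongr (SLd.refl _) (ih2.1 hf))
            (SLd.symm (SLd.addAssoc _ _ _)))
        · intro h
          have hf : ¬ Checks f := fun hf => h (checks_seq.mpr ⟨he, hf⟩)
          rw [hderiv]
          exact SLd.trans step (SLd.addCongr (SLd.refl _) (ih2.2 hf))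
      · have hderiv : SExp.deriv (seq e f) = seq (SExp.deriv e) f := by
          simp only [SExp.deriv, if_neg (show (Sum.inl () : Unit ⊕ A × SExp A) ∉ ell e from he)]
        refine ⟨fun h => absurd (checks_seq.mp h).1 he, fun _ => ?_⟩
        rw [hderiv]
        exact SLd.seqCongr (ih1.2 he) (SLd.refl f)
  | star e ih =>
      refine ⟨fun _ => ?_, fun h => absurd (checks_star e) h⟩
      have key : SLd (star e) (add (seq (SExp.deriv e) (star e)) one) := by
        by_cases he : Checks e
        · have hse : SLd (star e) (star (SExp.deriv e)) :=
            SLd.trans (SLd.starCongr (ih.1 he))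
              (SLd.trans (SLd.starOne (SExp.deriv e)) (SLd.starCongr (SLd.addZero _)))
          refine SLd.trans hse (SLd.trans (SLd.unroll (guarded_deriv e)) ?_)
          exact SLd.addCongr (SLd.seqCongr (SLd.refl _) (SLd.symm hse)) (SLd.refl one)
        · have hg : Guarded e := guarded_of_not_checks e he
          exact SLd.trans (SLd.unroll hg)
            (SLd.addCongr (SLd.seqCongr (ih.2 he) (SLd.refl _)) (SLd.refl one))
      simpa [SExp.deriv] using key
end

section
/- For every star expression e of Milner's star fragment, SL* ⊢ e* = (∂e)*. -/
namespace SExp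

variable {A : Type} [DecidableEq A]

/-- `o(e)`: `1` if `e ✓` else `0`. -/
def o (e : SExp A) : SExp A := if Checks e then one else zero

lemma sl_zero_add (e : SExp A) : SLd (add zero e) e :=
  (SLd.addComm _ _).trans (SLd.addZero e)

/-- AC exchange law. -/
lemma sl_exch (a b c d : SExp A) :
    SLd (add (add a b) (add c d)) (add (add a c) (add b d)) := by
  refine (SLd.addAssoc a b (add c d)).trans (SLd.trans ?_ (SLd.addAssoc a c (add b d)).symm)
  refine SLd.addCongr (SLd.refl a) ?_
  refine (SLd.addAssoc b c d).symm.trans ?_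
  exact (SLd.addCongr (SLd.addComm b c) (SLd.refl d)).trans (SLd.addAssoc c b d)

lemma o_add (e f : SExp A) : SLd (add (o e) (o f)) (o (add e f)) := by
  have hadd : Checks (add e f) ↔ Checks e ∨ Checks f := by
    simp [Checks, ell]
  by_cases h1 : Checks e <;> by_cases h2 : Checks f <;>
    simp only [o, h1, h2, hadd, if_pos, if_neg, if_true, if_false, or_self,
      true_or, or_true, not_false_eq_true, or_false, false_or]
  · exact SLd.addIdem one
  · exact SLd.addZero one
  · exact sl_zero_add one
  · exact SLd.addZero zero

/-- Fundamental theorem: `SL* ⊢ e = ∂e + o(e)`. -/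
lemma ft (e : SExp A) : SLd e (add (deriv e) (o e)) := by
  induction e with
  | zero =>
      have : o (zero : SExp A) = zero := if_neg (by simp [Checks, ell])
      rw [this]; exact (SLd.addZero zero).symm
  | one =>
      have : o (one : SExp A) = one := if_pos (by simp [Checks, ell])
      rw [this]
      exact (sl_zero_add (one : SExp A)).symm
  | act a =>
      have : o (act a : SExp A) = zero := if_neg (by simp [Checks, ell])
      rw [this]; exact (SLd.addZero _).symm
  | add e f ih1 ih2 =>
      refine (SLd.addCongr ih1 ih2).trans ?_
      refine (sl_exch _ _ _ _).trans ?_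
      exact SLd.addCongr (SLd.refl _) (o_add e f)
  | seq e f ih1 ih2 =>
      by_cases h : Checks e
      · have hd : deriv (seq e f) = add (seq (deriv e) f) (deriv f) := by
          simp only [deriv]; exact if_pos h
        have hoe : o e = one := if_pos h
        have ho : o (seq e f) = o f := by
          by_cases h2 : Checks f
          · rw [o, o, if_pos h2, if_pos (checks_seq.mpr ⟨h, h2⟩)]
          · rw [o, o, if_neg h2, if_neg (fun hc => h2 (checks_seq.mp hc).2)]
        rw [hd, ho]
        refine (SLd.seqCongr ih1 (SLd.refl f)).trans ?_
        rw [hoe]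
        refine (SLd.distR _ _ _).trans ?_
        refine (SLd.addCongr (SLd.refl _) ((SLd.oneSeq f).trans ih2)).trans ?_
        exact (SLd.addAssoc _ _ _).symm
      · have hd : deriv (seq e f) = seq (deriv e) f := by
          simp only [deriv]; exact if_neg h
        have hoe : o e = zero := if_neg h
        have ho : o (seq e f) = zero := if_neg (fun hc => h (checks_seq.mp hc).1)
        rw [hd, ho]
        refine (SLd.seqCongr ih1 (SLd.refl f)).trans ?_
        rw [hoe]
        refine (SLd.distR _ _ _).trans ?_
        exact SLd.addCongr (SLd.refl _) (SLd.zeroSeq f)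
  | star e ih =>
      have main : SLd (star e) (star (deriv e)) := by
        by_cases h : Checks e
        · have hoe : o e = one := if_pos h
          rw [hoe] at ih
          refine (SLd.starCongr ih).trans ?_
          refine (SLd.starOne _).trans ?_
          exact SLd.starCongr (SLd.addZero _)
        · have hoe : o e = zero := if_neg h
          rw [hoe] at ih
          exact SLd.starCongr (ih.trans (SLd.addZero _))
      have ho : o (star e) = one := if_pos (by simp [Checks, ell])
      show SLd (star e) (add (seq (deriv e) (star e)) (o (star e)))
      rw [ho]
      refine main.trans ?_
      refine (SLd.unroll (guarded_deriv e)).trans ?_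
      exact SLd.addCongr (SLd.seqCongr (SLd.refl _) main.symm) (SLd.refl one)

lemma main_of_ft {e : SExp A} (ih : SLd e (add (deriv e) (o e))) :
    SLd (star e) (star (deriv e)) := by
  by_cases h : Checks e
  · have hoe : o e = one := if_pos h
    rw [hoe] at ih
    exact (SLd.starCongr ih).trans ((SLd.starOne _).trans (SLd.starCongr (SLd.addZero _)))
  · have hoe : o e = zero := if_neg h
    rw [hoe] at ih
    exact SLd.starCongr (ih.trans (SLd.addZero _))

end SExp

/-- For every star expression `e` of Milner's star fragment,
`SL* ⊢ e* = (∂e)*`. -/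
theorem sl_star_deriv {A : Type} [DecidableEq A] (e : SExp A) :
    SExp.SLd (SExp.star e) (SExp.star (SExp.deriv e)) := by
  exact SExp.main_of_ft (SExp.ft e)
end

section
/- For every star expression e of the guarded-semilattice star fragment (GKAT syntax) and every b ⊆ At, if e ⇒ b then GS* ⊢ e = 1 +_b ∂e. -/
/-- Star expressions for the theory of guarded semilattices (the syntax of
GKAT): `e ::= 0 | 1 | a | e1 +_b e2 | e1·e2 | e^(b)` with `b ⊆ At`. -/
inductive GExp (At A : Type) : Type
  | zero : GExp At A
  | one : GExp At A
  | act : A → GExp At A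
  | add : Finset At → GExp At A → GExp At A → GExp At A
  | seq : GExp At A → GExp At A → GExp At A
  | star : Finset At → GExp At A → GExp At A
  deriving DecidableEq

namespace GExp

variable {At A : Type} [Fintype At] [DecidableEq At] [DecidableEq A]

/-- The small-step semantics `ℓ(e) : At → {⊥} ⊕ {✓} ⊕ (A × GExp)`, where
`⊥` is represented as `none`, `✓` as `some none`, and a transition `(a, e')`
as `some (some (a, e'))`. -/
def ell : GExp At A → At → Option (Option (A × GExp At A))
  | zero, _ => none
  | one, _ => some none
  | act a, _ => some (some (a, one))
  | add b e f, ξ => if ξ ∈ b then ell e ξ else ell f ξ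
  | seq e f, ξ =>
      match ell e ξ with
      | none => none
      | some none => ell f ξ
      | some (some (a, e')) => some (some (a, seq e' f))
  | star b e, ξ =>
      if ξ ∈ b then
        match ell e ξ with
        | some (some (a, e')) => some (some (a, seq e' (star b e)))
        | _ => none
      else some none

/-- The set of atoms at which `e` immediately accepts; `e ⇒ b` means
`acc e = b`. -/
def acc (e : GExp At A) : Finset At :=
  Finset.univ.filter (fun ξ => ell e ξ = some none)

/-- Guardedness of star expressions. -/
def Guarded : GExp At A → Prop
  | zero => True
  | one => False
  | act _ => True
  | add _ e f => Guarded e ∧ Guarded f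
  | seq e f => Guarded e ∨ Guarded f
  | star _ _ => False

/-- Derivability `GS* ⊢ e = f` in equational logic from the guarded
semilattice axioms, the sequencing axioms, the axiom
`(e +_c 1)^(b) = (e +_c 0)^(b)`, the guarded unrolling axiom, and the
fixpoint rule. -/
inductive GSd : GExp At A → GExp At A → Prop
  | refl (e) : GSd e e
  | symm {e f} : GSd e f → GSd f e
  | trans {e f g} : GSd e f → GSd f g → GSd e g
  | addCongr (b) {e1 f1 e2 f2} :
      GSd e1 f1 → GSd e2 f2 → GSd (add b e1 e2) (add b f1 f2)
  | seqCongr {e1 f1 e2 f2} : GSd e1 f1 → GSd e2 f2 → GSd (seq e1 e2) (seq f1 f2)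
  | starCongr (b) {e f} : GSd e f → GSd (star b e) (star b f)
  | gs1 (b e) : GSd (add b e e) e
  | gs2 (e f) : GSd (add Finset.univ e f) e
  | gs3 (b e f) : GSd (add b e f) (add bᶜ f e)
  | gs4 (b c e f g) : GSd (add c (add b e f) g) (add (b ∩ c) e (add c f g))
  | oneSeq (e) : GSd (seq one e) e
  | seqOne (e) : GSd (seq e one) e
  | zeroSeq (e) : GSd (seq zero e) zero
  | seqAssoc (e f g) : GSd (seq e (seq f g)) (seq (seq e f) g)
  | distR (b e f g) : GSd (seq (add b e f) g) (add b (seq e g) (seq f g))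
  | starOne (b c e) : GSd (star b (add c e one)) (star b (add c e zero))
  | unroll (b) {e} : Guarded e → GSd (star b e) (add b (seq e (star b e)) one)
  | fix (b) {e f g} : GSd g (add b (seq e g) f) → Guarded e → GSd g (seq (star b e) f)

/-- The derivative `∂e`: `∂0 = 0`, `∂1 = 0`, `∂a = a`,
`∂(e +_c f) = ∂e +_c ∂f`, and, when `e ⇒ b`, `∂(e·f) = ∂f +_b ∂e·f` and
`∂(e^(c)) = 0 +_b ∂e·e^(c)`. -/
def deriv : GExp At A → GExp At A
  | zero => zero
  | one => zero
  | act a => act a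
  | add c e f => add c (deriv e) (deriv f)
  | seq e f => add (acc e) (deriv f) (seq (deriv e) f)
  | star c e => add (acc e) zero (seq (deriv e) (star c e))

end GExp

/-!
The decomposition is proved by induction on `e`. The cases of `0`, `1`, actions, guarded
choice and sequencing only reshuffle guarded choices with the semilattice and
sequencing axioms. For `e^(c)`, rewrite the body as `1 +_{acc e} ∂e`; the axiom
`(e +_c 1)^(b) = (e +_c 0)^(b)` then replaces the `1` by `0`, which makes the body guarded
(every derivative is guarded), so guarded unrolling applies.
-/

namespace GExp

open Finset

section Acceptance

variable {At A : Type} [Fintype At] [DecidableEq At] [DecidableEq A]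

@[simp]
lemma mem_acc {e : GExp At A} {ξ : At} : ξ ∈ acc e ↔ ell e ξ = some none := by
  simp [acc]

@[simp]
lemma acc_zero : acc (zero : GExp At A) = ∅ := by
  simp [acc, ell]

@[simp]
lemma acc_one : acc (one : GExp At A) = univ := by
  simp [acc, ell]

@[simp]
lemma acc_act (a : A) : acc (act a : GExp At A) = ∅ := by
  simp [acc, ell]

lemma acc_add (c : Finset At) (e f : GExp At A) :
    acc (add c e f) = (acc e ∩ c) ∪ (acc f ∩ cᶜ) := by
  ext ξ
  by_cases h : ξ ∈ c <;> simp [ell, h]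

lemma acc_seq (e f : GExp At A) : acc (seq e f) = acc e ∩ acc f := by
  ext ξ
  rcases h : ell e ξ with _ | _ | ⟨a, e'⟩ <;> simp [ell, h]

lemma acc_star (c : Finset At) (e : GExp At A) : acc (star c e) = cᶜ := by
  ext ξ
  by_cases h : ξ ∈ c
  · rcases he : ell e ξ with _ | _ | ⟨a, e'⟩ <;> simp [ell, h, he]
  · simp [ell, h]

lemma guarded_deriv : ∀ e : GExp At A, Guarded (deriv e)
  | zero | one | act _ => trivial
  | add _ e f => ⟨guarded_deriv e, guarded_deriv f⟩
  | seq e f => ⟨guarded_deriv f, Or.inl (guarded_deriv e)⟩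
  | star _ e => ⟨trivial, Or.inl (guarded_deriv e)⟩

end Acceptance

namespace GSd

variable {At A : Type} [Fintype At] [DecidableEq At]

instance : Trans (GSd (At := At) (A := A)) GSd GSd := ⟨trans⟩

lemma add_empty (e f : GExp At A) : GSd (add ∅ e f) f := by
  have h := gs3 ∅ e f
  rw [compl_empty] at h
  exact h.trans (gs2 f e)

lemma add_left_comm (b c : Finset At) (e f g : GExp At A) :
    GSd (add b e (add c f g)) (add (c ∩ bᶜ) f (add b e g)) := by
  simpa using ((gs3 b e _).trans (gs4 c bᶜ f g e)).trans
    (addCongr _ (refl f) (gs3 bᶜ g e))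

lemma add_add_congr_guard {b c c' : Finset At} (h : c ∩ bᶜ = c' ∩ bᶜ) (e f g : GExp At A) :
    GSd (add b e (add c f g)) (add b e (add c' f g)) := by
  have h' := add_left_comm b c' e f g
  rw [← h] at h'
  exact (add_left_comm b c e f g).trans h'.symm

lemma add_add_same (r s : Finset At) (e g : GExp At A) :
    GSd (add r e (add s e g)) (add (r ∪ s) e g) := by
  have hguard : s ∩ rᶜ = (r ∪ s) ∩ rᶜ := by
    ext; simp only [mem_inter, mem_compl, mem_union]; tauto
  have hr : r ∩ (r ∪ s) = r := inter_eq_left.mpr subset_union_left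
  calc GSd (add r e (add s e g)) (add r e (add (r ∪ s) e g)) := add_add_congr_guard hguard e e g
    GSd _ (add (r ∪ s) (add r e e) g) := by simpa [hr] using (gs4 r (r ∪ s) e e g).symm
    GSd _ (add (r ∪ s) e g) := addCongr _ (gs1 r e) (refl g)

end GSd

section Decomposition

variable {At A : Type} [Fintype At] [DecidableEq At] [DecidableEq A]

def Decomposes (e : GExp At A) : Prop :=
  GSd e (add (acc e) one (deriv e))

open GSd

lemma decomposes_zero : Decomposes (zero : GExp At A) := by
  simpa [Decomposes, deriv] using (add_empty one zero).symm

lemma decomposes_one : Decomposes (one : GExp At A) := by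
  simpa [Decomposes, deriv] using (gs2 one zero).symm

lemma decomposes_act (a : A) : Decomposes (act a : GExp At A) := by
  simpa [Decomposes, deriv] using (add_empty one (act a)).symm

lemma decomposes_add (c : Finset At) {e f : GExp At A} (he : Decomposes e)
    (hf : Decomposes f) : Decomposes (add c e f) := by
  rw [Decomposes, acc_add]
  calc GSd (add c e f) (add c (add (acc e) one (deriv e)) (add (acc f) one (deriv f))) :=
        addCongr c he hf
    GSd _ (add (acc e ∩ c) one (add c (deriv e) (add (acc f) one (deriv f)))) := gs4 ..
    GSd _ (add (acc e ∩ c) one (add (acc f ∩ cᶜ) one (add c (deriv e) (deriv f)))) :=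
        addCongr _ (refl one) (add_left_comm ..)
    GSd _ _ := add_add_same ..

lemma decomposes_seq {e f : GExp At A} (he : Decomposes e) (hf : Decomposes f) :
    Decomposes (seq e f) := by
  rw [Decomposes, acc_seq, inter_comm]
  calc GSd (seq e f) (seq (add (acc e) one (deriv e)) f) := seqCongr he (refl f)
    GSd _ (add (acc e) (seq one f) (seq (deriv e) f)) := distR ..
    GSd _ (add (acc e) (add (acc f) one (deriv f)) (seq (deriv e) f)) :=
        addCongr _ ((oneSeq f).trans hf) (refl _)
    GSd _ _ := gs4 ..

lemma decomposes_star (c : Finset At) {e : GExp At A} (he : Decomposes e) :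
    Decomposes (star c e) := by
  rw [Decomposes, acc_star]
  set s := star c (add (acc e)ᶜ (deriv e) zero)
  have hs : GSd (star c e) s :=
    calc GSd (star c e) (star c (add (acc e) one (deriv e))) := starCongr c he
      GSd _ (star c (add (acc e)ᶜ (deriv e) one)) := starCongr c (gs3 ..)
      GSd _ s := starOne ..
  calc GSd (star c e) s := hs
    GSd _ (add c (seq (add (acc e)ᶜ (deriv e) zero) s) one) :=
        unroll c ⟨guarded_deriv e, trivial⟩
    GSd _ (add c (add (acc e)ᶜ (seq (deriv e) s) (seq zero s)) one) :=
        addCongr c (distR ..) (refl one)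
    GSd _ (add c (add (acc e)ᶜ (seq (deriv e) (star c e)) zero) one) :=
        addCongr c (addCongr _ (seqCongr (refl _) hs.symm) (zeroSeq s)) (refl one)
    GSd _ (add c (add (acc e) zero (seq (deriv e) (star c e))) one) :=
        addCongr c (gs3 ..).symm (refl one)
    GSd _ _ := gs3 ..

theorem decomposes : ∀ e : GExp At A, Decomposes e
  | zero => decomposes_zero
  | one => decomposes_one
  | act a => decomposes_act a
  | add c e f => decomposes_add c (decomposes e) (decomposes f)
  | seq e f => decomposes_seq (decomposes e) (decomposes f)
  | star c e => decomposes_star c (decomposes e)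

end Decomposition

end GExp

/-- For every star expression `e` of the guarded-semilattice star fragment
(GKAT syntax) and every `b ⊆ At`: if `e ⇒ b` then `GS* ⊢ e = 1 +_b ∂e`. -/
theorem gs_deriv_decomposition {At A : Type} [Fintype At] [DecidableEq At]
    [DecidableEq A] (e : GExp At A) (b : Finset At) (hb : GExp.acc e = b) :
    GExp.GSd e (GExp.add b GExp.one (GExp.deriv e)) :=
  hb ▸ GExp.decomposes e
end

section
/- Unrestricted unrolling is derivable in the guarded-semilattice star fragment: for every star expression e (guarded or not) and every b ⊆ At, GS* ⊢ e^(b) = e·e^(b) +_b 1. -/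
namespace GExp

variable {At A : Type} [Fintype At] [DecidableEq At] [DecidableEq A]

/-- `add ∅ e f = f`. -/
lemma emptyAdd (e f : GExp At A) : GSd (add (∅ : Finset At) e f) f := by
  have h := GSd.gs3 (∅ : Finset At) e f
  rw [show (∅ : Finset At)ᶜ = Finset.univ by simp] at h
  exact h.trans (GSd.gs2 f e)

/-- Left absorption: `add b (add b e f) g = add b e g`. -/
lemma absorb1 (b : Finset At) (e f g : GExp At A) :
    GSd (add b (add b e f) g) (add b e g) := by
  have h1 : GSd (add b (add b e f) g) (add b (add bᶜ f e) g) :=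
    GSd.addCongr b (GSd.gs3 b e f) (GSd.refl g)
  have h2 := GSd.gs4 bᶜ b f e g
  rw [show bᶜ ∩ b = (∅ : Finset At) by ext x; simp] at h2
  exact h1.trans (h2.trans (emptyAdd f (add b e g)))

/-- Right absorption: `add b e (add b f g) = add b e g`. -/
lemma absorb2 (b : Finset At) (e f g : GExp At A) :
    GSd (add b e (add b f g)) (add b e g) := by
  have h := GSd.gs4 b b e f g
  rw [Finset.inter_self] at h
  exact h.symm.trans (absorb1 b e f g)

/-- Merging nested guards with the same left branch. -/
lemma merge (s t : Finset At) (u z : GExp At A) :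
    GSd (add s u (add t u z)) (add (s ∪ t) u z) := by
  -- derive `add (t ∪ s) u z = add s u (add t u z)` and flip
  have h0 : GSd (add (t ∪ s) u z) (add (t ∪ s)ᶜ z u) := GSd.gs3 _ u z
  rw [show (t ∪ s)ᶜ = tᶜ ∩ sᶜ by ext x; simp] at h0
  have h1 : GSd (add (tᶜ ∩ sᶜ) z u) (add (tᶜ ∩ sᶜ) z (add sᶜ u u)) :=
    GSd.addCongr _ (GSd.refl z) (GSd.gs1 sᶜ u).symm
  have h2 : GSd (add sᶜ (add tᶜ z u) u) (add (tᶜ ∩ sᶜ) z (add sᶜ u u)) :=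
    GSd.gs4 tᶜ sᶜ z u u
  have h3 : GSd (add sᶜ (add tᶜ z u) u) (add sᶜᶜ u (add tᶜ z u)) :=
    GSd.gs3 _ _ _
  rw [compl_compl] at h3
  have h4 : GSd (add tᶜ z u) (add tᶜᶜ u z) := GSd.gs3 _ _ _
  rw [compl_compl] at h4
  have h5 : GSd (add s u (add tᶜ z u)) (add s u (add t u z)) :=
    GSd.addCongr _ (GSd.refl u) h4
  have := ((h0.trans h1).trans h2.symm).trans (h3.trans h5)
  rw [show t ∪ s = s ∪ t from Finset.union_comm t s] at this
  exact this.symm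

/-- Transforming a star of an unguarded decomposition into a guarded star. -/
lemma e1 (b c : Finset At) (d : GExp At A) :
    GSd (star b (add c one d)) (star b (add cᶜ d zero)) :=
  (GSd.starCongr b (GSd.gs3 c one d)).trans (GSd.starOne b cᶜ d)

/-- The key algebraic step. -/
lemma e3 (b c : Finset At) (d : GExp At A) (hd : Guarded d) :
    GSd (add b (seq (add cᶜ d zero) (star b (add cᶜ d zero))) one)
        (add b (seq (add c one d) (star b (add cᶜ d zero))) one) := by
  set h : GExp At A := add cᶜ d zero with hh
  set X : GExp At A := star b h with hX'
  set Z : GExp At A := seq d X with hZ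
  set W : GExp At A := add c zero Z with hW'
  have hGh : Guarded h := ⟨hd, trivial⟩
  -- seq h X = W
  have hW : GSd (seq h X) W := by
    have d1 : GSd (seq h X) (add cᶜ (seq d X) (seq zero X)) := GSd.distR cᶜ d zero X
    have d2 : GSd (add cᶜ (seq d X) (seq zero X)) (add cᶜ Z zero) :=
      GSd.addCongr _ (GSd.refl Z) (GSd.zeroSeq X)
    have d3 : GSd (add cᶜ Z zero) (add cᶜᶜ zero Z) := GSd.gs3 _ _ _
    rw [compl_compl] at d3
    exact (d1.trans d2).trans d3
  -- seq (add c one d) X = add c X Z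
  have hE : GSd (seq (add c one d) X) (add c X Z) :=
    (GSd.distR c one d X).trans (GSd.addCongr c (GSd.oneSeq X) (GSd.refl Z))
  -- X = add b W one
  have hX : GSd X (add b W one) :=
    (GSd.unroll b hGh).trans (GSd.addCongr b hW (GSd.refl one))
  -- main chain
  have s1 : GSd (add b (seq h X) one) (add b W one) :=
    GSd.addCongr b hW (GSd.refl one)
  have s2 : GSd (add b W one) (add b (add c W Z) one) :=
    GSd.addCongr b (absorb1 c zero Z Z).symm (GSd.refl one)
  have s3 : GSd (add b (add c W Z) one) (add (c ∩ b) W (add b Z one)) :=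
    GSd.gs4 c b W Z one
  have s4 : GSd (add (c ∩ b) W (add b Z one))
      (add (c ∩ b) W (add (c ∩ b) one (add b Z one))) :=
    (absorb2 (c ∩ b) W one (add b Z one)).symm
  have s5 := GSd.gs4 b (c ∩ b) W one (add b Z one)
  rw [show b ∩ (c ∩ b) = c ∩ b by ext x; simp] at s5
  have s6 : GSd (add (c ∩ b) (add b W one) (add b Z one))
      (add (c ∩ b) X (add b Z one)) :=
    GSd.addCongr _ hX.symm (GSd.refl _)
  have s7 : GSd (add b (add c X Z) one) (add (c ∩ b) X (add b Z one)) :=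
    GSd.gs4 c b X Z one
  have s8 : GSd (add b (add c X Z) one) (add b (seq (add c one d) X) one) :=
    GSd.addCongr b hE.symm (GSd.refl one)
  exact ((((s1.trans s2).trans s3).trans s4).trans
    ((s5.symm.trans s6).trans (s7.symm.trans s8)))

/-- Every expression decomposes as `add c one d` with `d` guarded. -/
lemma decomp (e : GExp At A) :
    ∃ (c : Finset At) (d : GExp At A), Guarded d ∧ GSd e (add c one d) := by
  induction e with
  | zero => exact ⟨∅, zero, trivial, (emptyAdd one zero).symm⟩
  | one => exact ⟨Finset.univ, zero, trivial, (GSd.gs2 one zero).symm⟩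
  | act a => exact ⟨∅, act a, trivial, (emptyAdd one (act a)).symm⟩
  | add b e f ihe ihf =>
      obtain ⟨p, x, hx, hex⟩ := ihe
      obtain ⟨q, y, hy, hfy⟩ := ihf
      refine ⟨(p ∩ b) ∪ (q ∩ bᶜ), add bᶜ y x, ⟨hy, hx⟩, ?_⟩
      have c1 : GSd (add b e f) (add b (add p one x) (add q one y)) :=
        GSd.addCongr b hex hfy
      have c2 : GSd (add b (add p one x) (add q one y))
          (add (p ∩ b) one (add b x (add q one y))) :=
        GSd.gs4 p b one x (add q one y)
      have c3 : GSd (add b x (add q one y)) (add bᶜ (add q one y) x) :=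
        GSd.gs3 b x (add q one y)
      have c4 : GSd (add bᶜ (add q one y) x) (add (q ∩ bᶜ) one (add bᶜ y x)) :=
        GSd.gs4 q bᶜ one y x
      have c5 : GSd (add (p ∩ b) one (add (q ∩ bᶜ) one (add bᶜ y x)))
          (add ((p ∩ b) ∪ (q ∩ bᶜ)) one (add bᶜ y x)) :=
        merge (p ∩ b) (q ∩ bᶜ) one (add bᶜ y x)
      exact ((c1.trans c2).trans
        (GSd.addCongr _ (GSd.refl one) (c3.trans c4))).trans c5
  | seq e f ihe ihf =>
      obtain ⟨p, x, hx, hex⟩ := ihe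
      obtain ⟨q, y, hy, hfy⟩ := ihf
      refine ⟨q ∩ p, add p y (seq x f), ⟨hy, Or.inl hx⟩, ?_⟩
      have c1 : GSd (seq e f) (seq (add p one x) f) :=
        GSd.seqCongr hex (GSd.refl f)
      have c2 : GSd (seq (add p one x) f) (add p (seq one f) (seq x f)) :=
        GSd.distR p one x f
      have c3 : GSd (add p (seq one f) (seq x f)) (add p (add q one y) (seq x f)) :=
        GSd.addCongr p ((GSd.oneSeq f).trans hfy) (GSd.refl _)
      have c4 : GSd (add p (add q one y) (seq x f))
          (add (q ∩ p) one (add p y (seq x f))) :=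
        GSd.gs4 q p one y (seq x f)
      exact ((c1.trans c2).trans c3).trans c4
  | star b e ihe =>
      obtain ⟨p, x, hx, hex⟩ := ihe
      set h : GExp At A := add pᶜ x zero with hh
      have hGh : Guarded h := ⟨hx, trivial⟩
      refine ⟨bᶜ, seq h (star b h), Or.inl hGh, ?_⟩
      have c1 : GSd (star b e) (star b h) :=
        (GSd.starCongr b hex).trans (e1 b p x)
      have c2 : GSd (star b h) (add b (seq h (star b h)) one) :=
        GSd.unroll b hGh
      have c3 : GSd (add b (seq h (star b h)) one)
          (add bᶜ one (seq h (star b h))) := GSd.gs3 _ _ _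
      exact (c1.trans c2).trans c3

end GExp

/-- Unrestricted unrolling is derivable in the guarded-semilattice star
fragment: for every star expression `e` (guarded or not) and every `b ⊆ At`,
`GS* ⊢ e^(b) = e·e^(b) +_b 1`. -/
theorem gs_unrestricted_unrolling {At A : Type} [Fintype At] [DecidableEq At]
    [DecidableEq A] (e : GExp At A) (b : Finset At) :
    GExp.GSd (GExp.star b e) (GExp.add b (GExp.seq e (GExp.star b e)) GExp.one) := by
  obtain ⟨c, d, hd, hed⟩ := GExp.decomp e
  set h : GExp At A := GExp.add cᶜ d GExp.zero with hh
  set X : GExp At A := GExp.star b h with hX'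
  have hGh : GExp.Guarded h := ⟨hd, trivial⟩
  have s1 : GExp.GSd (GExp.star b e) X :=
    (GExp.GSd.starCongr b hed).trans (GExp.e1 b c d)
  have s2 : GExp.GSd X (GExp.add b (GExp.seq h X) GExp.one) :=
    GExp.GSd.unroll b hGh
  have s3 := GExp.e3 b c d hd
  have s4 : GExp.GSd (GExp.add b (GExp.seq (GExp.add c GExp.one d) X) GExp.one)
      (GExp.add b (GExp.seq e (GExp.star b e)) GExp.one) :=
    GExp.GSd.addCongr b (GExp.GSd.seqCongr hed.symm s1.symm) (GExp.GSd.refl _)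
  exact ((s1.trans s2).trans s3).trans s4
end
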